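/- arXiv:2004.08783 — 7 statements merged into one kernel-verified Lean document; each statement's English description precedes it below -/
import Mathlib

section
/- Let K ⊆ ℝ^m be a closed convex cone and let y_1, …, y_k, y ∈ ℝ^m. Then the following are equivalent: (1) for all x ∈ K, if x·y_i ≥ 0 for all i ∈ {1,…,k} then x·y ≥ 0; (2) for every ε > 0 there exists λ ≥ 0 such that for all x ∈ K, if x·y_i ≥ 0 for all i ∈ {1,…,k−1} then x·y + ε·‖x‖₂ ≥ λ·(x·y_k). -/
/-- Let `K ⊆ ℝ^m` be a closed convex cone and `y_1, …, y_k, y ∈ ℝ^m`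
(here the `k ≥ 1` vectors `y_1, …, y_k` are `y 0, …, y (Fin.last k)`).  Then
`∀ x ∈ K, (∀ i, x·y_i ≥ 0) → x·y ≥ 0` holds iff for every `ε > 0` there is `λ ≥ 0`
such that for all `x ∈ K` with `x·y_i ≥ 0` for `i ∈ {1,…,k−1}`,
`x·y + ε‖x‖₂ ≥ λ (x·y_k)`. -/
theorem stmt2 (m k : ℕ) (K : Set (EuclideanSpace ℝ (Fin m)))
    (hKclosed : IsClosed K)
    (hKadd : ∀ x ∈ K, ∀ x' ∈ K, x + x' ∈ K)
    (hKsmul : ∀ θ : ℝ, 0 ≤ θ → ∀ x ∈ K, θ • x ∈ K)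
    (y : Fin (k + 1) → EuclideanSpace ℝ (Fin m)) (c : EuclideanSpace ℝ (Fin m)) :
    (∀ x ∈ K, (∀ i : Fin (k + 1), 0 ≤ ∑ j, x j * y i j) → 0 ≤ ∑ j, x j * c j) ↔
    (∀ ε > (0 : ℝ), ∃ lam ≥ (0 : ℝ), ∀ x ∈ K,
      (∀ i : Fin k, 0 ≤ ∑ j, x j * y i.castSucc j) →
      lam * (∑ j, x j * y (Fin.last k) j) ≤ (∑ j, x j * c j) + ε * ‖x‖) := by
  classical
  set d : EuclideanSpace ℝ (Fin m) → EuclideanSpace ℝ (Fin m) → ℝ :=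
    fun x v => ∑ j, x j * v j with hd
  have d_smul : ∀ (θ : ℝ) (x v : EuclideanSpace ℝ (Fin m)), d (θ • x) v = θ * d x v := by
    intro θ x v
    simp [hd, Finset.mul_sum, PiLp.smul_apply, smul_eq_mul, mul_assoc]
  have d_add : ∀ (x x' v : EuclideanSpace ℝ (Fin m)), d (x + x') v = d x v + d x' v := by
    intro x x' v
    simp [hd, add_mul, Finset.sum_add_distrib, PiLp.add_apply]
  have d_zero : ∀ v : EuclideanSpace ℝ (Fin m), d 0 v = 0 := by
    intro v; simp [hd]
  have d_cont : ∀ v : EuclideanSpace ℝ (Fin m),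
      Continuous fun x : EuclideanSpace ℝ (Fin m) => d x v := by
    intro v
    exact continuous_finset_sum _ fun j _ =>
      (((continuous_apply j).comp (PiLp.continuous_ofLp 2 fun _ : Fin m => ℝ)).mul
        continuous_const)
  constructor
  · intro h1 ε hε
    -- STEP 1: key claim for unit vectors
    have key : ∃ lam ≥ (0 : ℝ), ∀ u ∈ K, ‖u‖ = 1 →
        (∀ i : Fin k, 0 ≤ d u (y i.castSucc)) →
        lam * d u (y (Fin.last k)) ≤ d u c + ε := by
      set S : Set (EuclideanSpace ℝ (Fin m)) :=
        {x | x ∈ K ∧ ‖x‖ = 1 ∧ (∀ i : Fin k, 0 ≤ d x (y i.castSucc)) ∧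
          d x (y (Fin.last k)) ≤ 0 ∧ d x c + ε ≤ 0} with hS
      have hSneg : ∀ x ∈ S, d x (y (Fin.last k)) < 0 := by
        intro x hx
        obtain ⟨hxK, hx1, hxc, hxk, hxce⟩ := hx
        rcases lt_or_eq_of_le hxk with h | h
        · exact h
        · exfalso
          have hall : ∀ i : Fin (k + 1), 0 ≤ d x (y i) := by
            intro i
            rcases Fin.eq_castSucc_or_eq_last i with ⟨j, rfl⟩ | rfl
            · exact hxc j
            · exact h.symm.le
          have := h1 x hxK hall
          linarith
      by_cases hSne : S.Nonempty
      · -- S nonempty: use compactness to get a maximizer of the ratio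
        have hScl : IsClosed S := by
          have e1 : IsClosed {x : EuclideanSpace ℝ (Fin m) | ‖x‖ = 1} :=
            isClosed_eq continuous_norm continuous_const
          have e2 : IsClosed {x : EuclideanSpace ℝ (Fin m) |
              ∀ i : Fin k, 0 ≤ d x (y i.castSucc)} := by
            have : {x : EuclideanSpace ℝ (Fin m) | ∀ i : Fin k, 0 ≤ d x (y i.castSucc)} =
                ⋂ i : Fin k, {x | 0 ≤ d x (y i.castSucc)} := by
              ext x; simp [Set.mem_iInter]
            rw [this]
            exact isClosed_iInter fun i => isClosed_le continuous_const (d_cont _)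
          have e3 : IsClosed {x : EuclideanSpace ℝ (Fin m) | d x (y (Fin.last k)) ≤ 0} :=
            isClosed_le (d_cont _) continuous_const
          have e4 : IsClosed {x : EuclideanSpace ℝ (Fin m) | d x c + ε ≤ 0} :=
            isClosed_le ((d_cont c).add continuous_const) continuous_const
          have : S = K ∩ ({x | ‖x‖ = 1} ∩
              ({x | ∀ i : Fin k, 0 ≤ d x (y i.castSucc)} ∩
                ({x | d x (y (Fin.last k)) ≤ 0} ∩ {x | d x c + ε ≤ 0}))) := by
            ext x
            simp only [hS, Set.mem_setOf_eq, Set.mem_inter_iff]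
            try tauto
          rw [this]
          exact hKclosed.inter (e1.inter (e2.inter (e3.inter e4)))
        have hSbd : Bornology.IsBounded S := by
          apply (Metric.isBounded_closedBall (x := (0 : EuclideanSpace ℝ (Fin m))) (r := 1)).subset
          intro x hx
          rw [Metric.mem_closedBall, dist_zero_right, hx.2.1]
        have hScp : IsCompact S := Metric.isCompact_of_isClosed_isBounded hScl hSbd
        have hgcont : ContinuousOn
            (fun x => (d x c + ε) / d x (y (Fin.last k))) S := by
          apply ContinuousOn.div
          · exact ((d_cont c).add continuous_const).continuousOn
          · exact (d_cont _).continuousOn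
          · exact fun x hx => (hSneg x hx).ne
        obtain ⟨x₀, hx₀S, hx₀max⟩ := hScp.exists_isMaxOn hSne hgcont
        have hbneg : d x₀ (y (Fin.last k)) < 0 := hSneg x₀ hx₀S
        have hx₀ce : d x₀ c + ε ≤ 0 := hx₀S.2.2.2.2
        set lam := (d x₀ c + ε) / d x₀ (y (Fin.last k)) with hlam
        have hlam0 : 0 ≤ lam := by
          rw [hlam, div_nonneg_iff]; right; exact ⟨hx₀ce, hbneg.le⟩
        refine ⟨lam, hlam0, ?_⟩
        intro u huK hu1 huc
        rcases lt_trichotomy (d u (y (Fin.last k))) 0 with hneg | hzero | hpos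
        · by_cases huce : d u c + ε ≤ 0
          · have huS : u ∈ S := ⟨huK, hu1, huc, hneg.le, huce⟩
            have hle : (d u c + ε) / d u (y (Fin.last k)) ≤ lam := hx₀max huS
            calc lam * d u (y (Fin.last k))
                ≤ ((d u c + ε) / d u (y (Fin.last k))) * d u (y (Fin.last k)) :=
                  mul_le_mul_of_nonpos_right hle hneg.le
              _ = d u c + ε := div_mul_cancel₀ _ hneg.ne
          · push_neg at huce
            nlinarith [mul_nonneg hlam0 (neg_nonneg.mpr hneg.le)]
        · rw [hzero, mul_zero]
          have hall : ∀ i : Fin (k + 1), 0 ≤ d u (y i) := by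
            intro i
            rcases Fin.eq_castSucc_or_eq_last i with ⟨j, rfl⟩ | rfl
            · exact huc j
            · exact le_of_eq hzero.symm
          have := h1 u huK hall
          linarith
        · -- cross argument: combine x₀ and u to kill the last coordinate
          set a := d u (y (Fin.last k)) with ha
          set b := d x₀ (y (Fin.last k)) with hb
          have hzK : a • x₀ + (-b) • u ∈ K :=
            hKadd _ (hKsmul a hpos.le x₀ hx₀S.1) _ (hKsmul (-b) (by linarith) u huK)
          have hzc : 0 ≤ d (a • x₀ + (-b) • u) c := by
            apply h1 _ hzK
            intro i
            show 0 ≤ d (a • x₀ + (-b) • u) (y i)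
            rw [d_add, d_smul, d_smul]
            rcases Fin.eq_castSucc_or_eq_last i with ⟨j, rfl⟩ | rfl
            · have := hx₀S.2.2.1 j
              have := huc j
              nlinarith
            · rw [← ha, ← hb]; nlinarith
          rw [d_add, d_smul, d_smul] at hzc
          rw [hlam, div_mul_eq_mul_div, div_le_iff_of_neg hbneg]
          nlinarith
      · -- S empty: lam = 0 works
        refine ⟨0, le_refl 0, ?_⟩
        intro u huK hu1 huc
        rw [zero_mul]
        by_contra hcon
        push_neg at hcon
        rcases le_or_gt (d u (y (Fin.last k))) 0 with hle | hgt
        · exact hSne ⟨u, huK, hu1, huc, hle, by linarith⟩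
        · have hall : ∀ i : Fin (k + 1), 0 ≤ d u (y i) := by
            intro i
            rcases Fin.eq_castSucc_or_eq_last i with ⟨j, rfl⟩ | rfl
            · exact huc j
            · exact hgt.le
          have := h1 u huK hall
          linarith
    -- STEP 2: scale to general x
    obtain ⟨lam, hlam0, hkey⟩ := key
    refine ⟨lam, hlam0, ?_⟩
    intro x hxK hxc
    by_cases hx0 : x = 0
    · subst hx0
      simp [d_zero]
    · have hnx : 0 < ‖x‖ := norm_pos_iff.mpr hx0
      set u : EuclideanSpace ℝ (Fin m) := ‖x‖⁻¹ • x with hu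
      have huK : u ∈ K := hKsmul _ (inv_nonneg.mpr hnx.le) x hxK
      have hu1 : ‖u‖ = 1 := by
        rw [hu, norm_smul, norm_inv, norm_norm, inv_mul_cancel₀ hnx.ne']
      have hud : ∀ v, d u v = ‖x‖⁻¹ * d x v := fun v => d_smul _ _ _
      have huc : ∀ i : Fin k, 0 ≤ d u (y i.castSucc) := by
        intro i
        rw [hud]
        exact mul_nonneg (inv_nonneg.mpr hnx.le) (hxc i)
      have h := hkey u huK hu1 huc
      rw [hud, hud] at h
      have h' := mul_le_mul_of_nonneg_left h hnx.le
      have e1 : ‖x‖ * (lam * (‖x‖⁻¹ * d x (y (Fin.last k)))) = lam * d x (y (Fin.last k)) := by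
        field_simp
      have e2 : ‖x‖ * (‖x‖⁻¹ * d x c + ε) = d x c + ε * ‖x‖ := by
        field_simp
      rw [e1, e2] at h'
      exact h'
  · -- (2) → (1)
    intro h2 x hxK hxall
    have hxlast : 0 ≤ d x (y (Fin.last k)) := hxall (Fin.last k)
    have hxcast : ∀ i : Fin k, 0 ≤ d x (y i.castSucc) := fun i => hxall i.castSucc
    by_contra hneg
    push_neg at hneg
    have hneg' : d x c < 0 := hneg
    have hx0 : x ≠ 0 := by
      intro h
      rw [h] at hneg
      simp at hneg
    have hnx : 0 < ‖x‖ := norm_pos_iff.mpr hx0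
    obtain ⟨lam, hlam0, h⟩ := h2 (-(d x c) / (2 * ‖x‖))
      (div_pos (by linarith) (by positivity))
    have hh := h x hxK hxcast
    have he : -(d x c) / (2 * ‖x‖) * ‖x‖ = -(d x c) / 2 := by
      field_simp
    rw [he] at hh
    nlinarith [mul_nonneg hlam0 hxlast]
end

section
/- Let K ⊆ ℝ^m be a closed convex cone, let y_1, …, y_k, y ∈ ℝ^m, and suppose the set {y_1, …, y_k} has slack with respect to K, i.e. there exists x₀ ∈ K with x₀·y_i > 0 for every i ∈ {1,…,k}. Then the following are equivalent: (1) for all x ∈ K, if x·y_i ≥ 0 for all i ∈ {1,…,k} then x·y ≥ 0; (2) there exists λ ≥ 0 such that for all x ∈ K, if x·y_i ≥ 0 for all i ∈ {1,…,k−1} then x·y ≥ λ·(x·y_k). -/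
/-- Let `K ⊆ ℝ^m` be a closed convex cone, `y_1, …, y_k, y ∈ ℝ^m`
(the `k ≥ 1` vectors `y_1, …, y_k` are `y 0, …, y (Fin.last k)`), and suppose
`{y_1, …, y_k}` has slack w.r.t. `K`.  Then `∀ x ∈ K, (∀ i, x·y_i ≥ 0) → x·y ≥ 0`
holds iff there is `λ ≥ 0` such that for all `x ∈ K` with `x·y_i ≥ 0` for
`i ∈ {1,…,k−1}`, `x·y ≥ λ (x·y_k)`. -/
theorem stmt3 (m k : ℕ) (K : Set (Fin m → ℝ))
    (hKclosed : IsClosed K)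
    (hKadd : ∀ x ∈ K, ∀ x' ∈ K, x + x' ∈ K)
    (hKsmul : ∀ θ : ℝ, 0 ≤ θ → ∀ x ∈ K, θ • x ∈ K)
    (y : Fin (k + 1) → Fin m → ℝ) (c : Fin m → ℝ)
    (hslack : ∃ x₀ ∈ K, ∀ i : Fin (k + 1), 0 < ∑ j, x₀ j * y i j) :
    (∀ x ∈ K, (∀ i : Fin (k + 1), 0 ≤ ∑ j, x j * y i j) → 0 ≤ ∑ j, x j * c j) ↔
    (∃ lam ≥ (0 : ℝ), ∀ x ∈ K,
      (∀ i : Fin k, 0 ≤ ∑ j, x j * y i.castSucc j) →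
      lam * (∑ j, x j * y (Fin.last k) j) ≤ ∑ j, x j * c j) := by
  obtain ⟨x₀, hx₀K, hx₀⟩ := hslack
  constructor
  · intro h1
    -- key comparison inequality between a "negative" and a "positive" point
    have key : ∀ x ∈ K, (∀ i : Fin k, 0 ≤ ∑ j, x j * y i.castSucc j) →
        (∑ j, x j * y (Fin.last k) j) < 0 →
        ∀ x' ∈ K, (∀ i : Fin k, 0 ≤ ∑ j, x' j * y i.castSucc j) →
        0 < (∑ j, x' j * y (Fin.last k) j) →
        (∑ j, x j * c j) / (∑ j, x j * y (Fin.last k) j)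
          ≤ (∑ j, x' j * c j) / (∑ j, x' j * y (Fin.last k) j) := by
      intro x hxK hx hxneg x' hx'K hx' hx'pos
      set a := ∑ j, x j * y (Fin.last k) j with ha
      set b := ∑ j, x' j * y (Fin.last k) j with hb
      set z : Fin m → ℝ := b • x + (-a) • x' with hz
      have hzK : z ∈ K := hKadd _ (hKsmul b (le_of_lt hx'pos) x hxK) _
        (hKsmul (-a) (by linarith) x' hx'K)
      have hdz : ∀ v : Fin m → ℝ, (∑ j, z j * v j)
          = b * (∑ j, x j * v j) + (-a) * (∑ j, x' j * v j) := by
        intro v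
        rw [Finset.mul_sum, Finset.mul_sum, ← Finset.sum_add_distrib]
        apply Finset.sum_congr rfl
        intro j _
        simp only [hz, Pi.add_apply, Pi.smul_apply, smul_eq_mul]
        ring
      have hzc : 0 ≤ ∑ j, z j * c j := by
        apply h1 z hzK
        intro i
        rw [hdz]
        induction i using Fin.lastCases with
        | last =>
          rw [← ha, ← hb]; ring_nf; exact le_refl 0
        | cast i =>
          have h1' := hx i
          have h2' := hx' i
          nlinarith
      rw [hdz] at hzc
      rw [div_le_iff_of_neg hxneg, div_mul_eq_mul_div, div_le_iff₀ hx'pos]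
      nlinarith
    -- x₀ is a "positive" point
    have hx₀pos : 0 < ∑ j, x₀ j * y (Fin.last k) j := hx₀ (Fin.last k)
    have hx₀cast : ∀ i : Fin k, 0 ≤ ∑ j, x₀ j * y i.castSucc j :=
      fun i => le_of_lt (hx₀ i.castSucc)
    set S : Set ℝ := {r : ℝ | ∃ x ∈ K, (∀ i : Fin k, 0 ≤ ∑ j, x j * y i.castSucc j) ∧
        (∑ j, x j * y (Fin.last k) j) < 0 ∧
        r = (∑ j, x j * c j) / (∑ j, x j * y (Fin.last k) j)} with hS
    have hSbdd : BddAbove S := by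
      refine ⟨(∑ j, x₀ j * c j) / (∑ j, x₀ j * y (Fin.last k) j), ?_⟩
      rintro r ⟨x, hxK, hx, hxneg, rfl⟩
      exact key x hxK hx hxneg x₀ hx₀K hx₀cast hx₀pos
    refine ⟨max 0 (sSup S), le_max_left _ _, ?_⟩
    intro x hxK hx
    rcases lt_trichotomy (∑ j, x j * y (Fin.last k) j) 0 with hneg | hzero | hpos
    · have hmem : (∑ j, x j * c j) / (∑ j, x j * y (Fin.last k) j) ∈ S :=
        ⟨x, hxK, hx, hneg, rfl⟩
      have hle : (∑ j, x j * c j) / (∑ j, x j * y (Fin.last k) j) ≤ max 0 (sSup S) :=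
        le_trans (le_csSup hSbdd hmem) (le_max_right _ _)
      have := mul_le_mul_of_nonpos_right hle (le_of_lt hneg)
      rwa [div_mul_cancel₀ _ (ne_of_lt hneg)] at this
    · have hall : ∀ i : Fin (k + 1), 0 ≤ ∑ j, x j * y i j := by
        intro i
        induction i using Fin.lastCases with
        | last => rw [hzero]
        | cast i => exact hx i
      have := h1 x hxK hall
      rw [hzero, mul_zero]
      exact this
    · have hall : ∀ i : Fin (k + 1), 0 ≤ ∑ j, x j * y i j := by
        intro i
        induction i using Fin.lastCases with
        | last => exact le_of_lt hpos
        | cast i => exact hx i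
      have hc0 : 0 ≤ ∑ j, x j * c j := h1 x hxK hall
      have hratio : 0 ≤ (∑ j, x j * c j) / (∑ j, x j * y (Fin.last k) j) :=
        div_nonneg hc0 (le_of_lt hpos)
      have hsup : sSup S ≤ (∑ j, x j * c j) / (∑ j, x j * y (Fin.last k) j) := by
        apply Real.sSup_le _ hratio
        rintro r ⟨x', hx'K, hx', hx'neg, rfl⟩
        exact key x' hx'K hx' hx'neg x hxK hx hpos
      have hle : max 0 (sSup S) ≤ (∑ j, x j * c j) / (∑ j, x j * y (Fin.last k) j) :=
        max_le hratio hsup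
      have := mul_le_mul_of_nonneg_right hle (le_of_lt hpos)
      rwa [div_mul_cancel₀ _ (ne_of_gt hpos)] at this
  · rintro ⟨lam, hlam0, h⟩ x hxK hall
    have h2 := h x hxK (fun i => hall i.castSucc)
    have h3 : 0 ≤ lam * (∑ j, x j * y (Fin.last k) j) :=
      mul_nonneg hlam0 (hall (Fin.last k))
    linarith
end

section
/- Let K ⊆ ℝ^m be a closed convex cone, let y_1, …, y_k, y ∈ ℝ^m, and assume {y_1, …, y_k} has slack with respect to K. Then the following are equivalent: (1) for all x ∈ K, if x·y_i ≥ 0 for all i ∈ {1,…,k} then x·y ≥ 0; (2) there exist λ_1 ≥ 0, …, λ_k ≥ 0 such that for all x ∈ K, x·y ≥ ∑_{i=1}^{k} λ_i·(x·y_i). -/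
open Filter Topology

namespace Stmt4Aux

noncomputable def dot {m : ℕ} (x y : Fin m → ℝ) : ℝ := ∑ j, x j * y j

lemma dot_comm {m : ℕ} (x y : Fin m → ℝ) : dot x y = dot y x :=
  Finset.sum_congr rfl fun j _ => mul_comm _ _

lemma dot_smul_right {m : ℕ} (θ : ℝ) (x y : Fin m → ℝ) : dot x (θ • y) = θ * dot x y := by
  unfold dot; rw [Finset.mul_sum]
  exact Finset.sum_congr rfl fun j _ => by simp [mul_comm, mul_left_comm]

lemma dot_add_right {m : ℕ} (x y z : Fin m → ℝ) : dot x (y + z) = dot x y + dot x z := by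
  unfold dot; rw [← Finset.sum_add_distrib]
  exact Finset.sum_congr rfl fun j _ => by simp [mul_add]

lemma dot_zero_right {m : ℕ} (x : Fin m → ℝ) : dot x 0 = 0 := by
  unfold dot; simp

lemma tendsto_dot {m : ℕ} (x : Fin m → ℝ) {cs : ℕ → Fin m → ℝ} {c : Fin m → ℝ}
    (h : Tendsto cs atTop (𝓝 c)) :
    Tendsto (fun n => dot x (cs n)) atTop (𝓝 (dot x c)) := by
  unfold dot
  apply tendsto_finset_sum
  intro j _
  exact (tendsto_const_nhds.mul ((tendsto_pi_nhds.1 h) j))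

/-- Representation of a continuous linear functional as a dot product. -/
lemma exists_repr {m : ℕ} (f : (Fin m → ℝ) →L[ℝ] ℝ) :
    ∃ a : Fin m → ℝ, ∀ z : Fin m → ℝ, f z = dot z a := by
  refine ⟨fun j => f (fun t => if j = t then 1 else 0), fun z => ?_⟩
  conv_lhs => rw [pi_eq_sum_univ z]
  rw [map_sum]
  exact Finset.sum_congr rfl fun j _ => by rw [map_smul]; simp [dot, smul_eq_mul]

/-- Bipolar-type lemma: if `x` lies in the double dual of a closed convex cone `K`,
then `x ∈ K`. -/
lemma mem_of_dual {m : ℕ} {K : Set (Fin m → ℝ)} (hKclosed : IsClosed K)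
    (hconv : Convex ℝ K) (h0 : (0 : Fin m → ℝ) ∈ K)
    (hKsmul : ∀ θ : ℝ, 0 ≤ θ → ∀ x ∈ K, θ • x ∈ K)
    (x : Fin m → ℝ)
    (hx : ∀ a : Fin m → ℝ, (∀ z ∈ K, 0 ≤ dot z a) → 0 ≤ dot x a) : x ∈ K := by
  by_contra hxK
  obtain ⟨f, u, hfx, hfs⟩ := geometric_hahn_banach_point_closed hconv hKclosed hxK
  have hu0 : u < 0 := by simpa using hfs 0 h0
  have hfnn : ∀ z ∈ K, 0 ≤ f z := by
    intro z hz
    by_contra hneg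
    push_neg at hneg
    have hθ : (0:ℝ) < (u - 1) / f z := div_pos_of_neg_of_neg (by linarith) hneg
    have := hfs _ (hKsmul _ hθ.le z hz)
    rw [map_smul, smul_eq_mul, div_mul_cancel₀ _ hneg.ne] at this
    linarith
  obtain ⟨a, ha⟩ := exists_repr f
  have : 0 ≤ dot x a := hx a (fun z hz => (ha z) ▸ hfnn z hz)
  rw [← ha] at this
  linarith

end Stmt4Aux

open Stmt4Aux Filter Topology

/-- Let `K ⊆ ℝ^m` be a closed convex cone, `y_1, …, y_k, y ∈ ℝ^m`, and
assume `{y_1, …, y_k}` has slack w.r.t. `K`.  Then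
`∀ x ∈ K, (∀ i, x·y_i ≥ 0) → x·y ≥ 0` holds iff there are `λ_1, …, λ_k ≥ 0` such that
`x·y ≥ ∑ i λ_i (x·y_i)` for all `x ∈ K`. -/
theorem stmt4 (m k : ℕ) (K : Set (Fin m → ℝ))
    (hKclosed : IsClosed K)
    (hKadd : ∀ x ∈ K, ∀ x' ∈ K, x + x' ∈ K)
    (hKsmul : ∀ θ : ℝ, 0 ≤ θ → ∀ x ∈ K, θ • x ∈ K)
    (y : Fin k → Fin m → ℝ) (c : Fin m → ℝ)
    (hslack : ∃ x₀ ∈ K, ∀ i : Fin k, 0 < ∑ j, x₀ j * y i j) :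
    (∀ x ∈ K, (∀ i : Fin k, 0 ≤ ∑ j, x j * y i j) → 0 ≤ ∑ j, x j * c j) ↔
    (∃ lam : Fin k → ℝ, (∀ i, 0 ≤ lam i) ∧
      ∀ x ∈ K, (∑ i, lam i * ∑ j, x j * y i j) ≤ ∑ j, x j * c j) := by
  obtain ⟨x₀, hx₀K, hx₀⟩ := hslack
  have h0K : (0 : Fin m → ℝ) ∈ K := by simpa using hKsmul 0 le_rfl x₀ hx₀K
  have hconv : Convex ℝ K := by
    intro a ha b hb s t hs ht hst
    exact hKadd _ (hKsmul s hs a ha) _ (hKsmul t ht b hb)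
  constructor
  · intro h1
    -- the set S of vectors dominating a nonnegative combination of the y i over K
    set S : Set (Fin m → ℝ) :=
      {c' | ∃ lam : Fin k → ℝ, (∀ i, 0 ≤ lam i) ∧
        ∀ x ∈ K, (∑ i, lam i * dot x (y i)) ≤ dot x c'} with hS
    have h0S : (0 : Fin m → ℝ) ∈ S := by
      refine ⟨0, fun i => le_rfl, fun x hx => ?_⟩
      simp [dot_zero_right]
    -- S is convex
    have hSconv : Convex ℝ S := by
      rintro a ⟨la, hla, ha⟩ b ⟨lb, hlb, hb⟩ s t hs ht hst
      refine ⟨s • la + t • lb, fun i =>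
        add_nonneg (mul_nonneg hs (hla i)) (mul_nonneg ht (hlb i)), fun x hx => ?_⟩
      rw [dot_add_right, dot_smul_right, dot_smul_right]
      have := mul_le_mul_of_nonneg_left (ha x hx) hs
      have := mul_le_mul_of_nonneg_left (hb x hx) ht
      have e : (∑ i, (s • la + t • lb) i * dot x (y i))
          = s * (∑ i, la i * dot x (y i)) + t * (∑ i, lb i * dot x (y i)) := by
        rw [Finset.mul_sum, Finset.mul_sum, ← Finset.sum_add_distrib]
        refine Finset.sum_congr rfl fun i _ => by simp [add_mul, mul_assoc]
      rw [e]; linarith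
    -- S is a cone
    have hSsmul : ∀ θ : ℝ, 0 ≤ θ → ∀ z ∈ S, θ • z ∈ S := by
      rintro θ hθ z ⟨l, hl, hz⟩
      refine ⟨θ • l, fun i => mul_nonneg hθ (hl i), fun x hx => ?_⟩
      rw [dot_smul_right]
      have e : (∑ i, (θ • l) i * dot x (y i)) = θ * ∑ i, l i * dot x (y i) := by
        rw [Finset.mul_sum]
        exact Finset.sum_congr rfl fun i _ => by simp [mul_assoc]
      rw [e]
      exact mul_le_mul_of_nonneg_left (hz x hx) hθ
    -- S is closed (uses the slack point x₀)
    have hSclosed : IsClosed S := by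
      apply IsSeqClosed.isClosed
      intro cs c' hcs hlim
      choose lam hlamnn hlamle using hcs
      have hbdd : BddAbove (Set.range fun n => dot x₀ (cs n)) :=
        (tendsto_dot x₀ hlim).bddAbove_range
      obtain ⟨M, hM⟩ := hbdd
      have hMn : ∀ n, dot x₀ (cs n) ≤ M := fun n => hM ⟨n, rfl⟩
      -- bound each coordinate of lam n
      set B : Fin k → ℝ := fun i => max (M / dot x₀ (y i)) 0 with hB
      have hmem : ∀ n, lam n ∈ Set.Icc (0 : Fin k → ℝ) B := by
        intro n
        constructor
        · intro i; exact hlamnn n i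
        · intro i
          have hyi : 0 < dot x₀ (y i) := hx₀ i
          have hsum : lam n i * dot x₀ (y i) ≤ ∑ j, lam n j * dot x₀ (y j) := by
            apply Finset.single_le_sum (f := fun j => lam n j * dot x₀ (y j))
              (fun j _ => mul_nonneg (hlamnn n j) (hx₀ j).le) (Finset.mem_univ i)
          have h1' : lam n i * dot x₀ (y i) ≤ M := le_trans hsum (le_trans (hlamle n x₀ hx₀K) (hMn n))
          have : lam n i ≤ M / dot x₀ (y i) := (le_div_iff₀ hyi).2 h1'
          exact le_trans this (le_max_left _ _)
      obtain ⟨l, hlIcc, φ, hφ, hφlim⟩ :=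
        (isCompact_Icc (a := (0 : Fin k → ℝ)) (b := B)).tendsto_subseq hmem
      refine ⟨l, fun i => hlIcc.1 i, fun x hx => ?_⟩
      have hT1 : Tendsto (fun n => ∑ i, lam (φ n) i * dot x (y i)) atTop
          (𝓝 (∑ i, l i * dot x (y i))) := by
        apply tendsto_finset_sum
        intro i _
        exact ((tendsto_pi_nhds.1 hφlim) i).mul_const _
      have hT2 : Tendsto (fun n => dot x (cs (φ n))) atTop (𝓝 (dot x c')) :=
        (tendsto_dot x hlim).comp hφ.tendsto_atTop
      exact le_of_tendsto_of_tendsto' hT1 hT2 (fun n => hlamle (φ n) x hx)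
    -- now separate c from S if c ∉ S
    by_contra hcS
    have hcS' : c ∉ S := hcS
    obtain ⟨f, u, hfc, hfs⟩ := geometric_hahn_banach_point_closed hSconv hSclosed hcS'
    have hu0 : u < 0 := by simpa using hfs 0 h0S
    have hfnn : ∀ z ∈ S, 0 ≤ f z := by
      intro z hz
      by_contra hneg
      push_neg at hneg
      have hθ : (0:ℝ) < (u - 1) / f z := div_pos_of_neg_of_neg (by linarith) hneg
      have := hfs _ (hSsmul _ hθ.le z hz)
      rw [map_smul, smul_eq_mul, div_mul_cancel₀ _ hneg.ne] at this
      linarith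
    obtain ⟨a, ha⟩ := exists_repr f
    -- a ∈ K
    have haK : a ∈ K := by
      apply mem_of_dual hKclosed hconv h0K hKsmul
      intro b hb
      have hbS : b ∈ S := ⟨0, fun i => le_rfl, fun x hx => by
        simpa using hb x hx⟩
      have := hfnn b hbS
      rw [ha b, dot_comm] at this
      exact this
    -- a · y i ≥ 0
    have hay : ∀ i, 0 ≤ dot a (y i) := by
      intro i
      have hyS : y i ∈ S := by
        refine ⟨Pi.single i 1, fun j => by
          rcases eq_or_ne j i with h | h <;> simp [Pi.single_apply, h], fun x hx => ?_⟩
        have : (∑ j, (Pi.single i (1:ℝ) : Fin k → ℝ) j * dot x (y j)) = dot x (y i) := by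
          rw [Finset.sum_eq_single i]
          · simp
          · intro b _ hb; simp [Pi.single_apply, hb]
          · intro h; exact absurd (Finset.mem_univ i) h
        rw [this]
      have := hfnn _ hyS
      rw [ha, dot_comm] at this
      exact this
    have hac : 0 ≤ dot a c := h1 a haK hay
    have : f c < 0 := lt_trans hfc hu0
    rw [ha, dot_comm] at this
    linarith
  · rintro ⟨lam, hlam, h⟩ x hx hxy
    have h0 : 0 ≤ ∑ i, lam i * ∑ j, x j * y i j :=
      Finset.sum_nonneg fun i _ => mul_nonneg (hlam i) (hxy i)
    exact le_trans h0 (h x hx)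
end

section
/- Let K ⊆ ℝ^m be a convex cone that is disjoint from the strictly negative orthant, i.e. K ∩ (−∞,0)^m = ∅ (equivalently, for every x ∈ K there is a coordinate j with x_j ≥ 0). Then there exists a nonzero vector y ∈ ℝ^m with y_j ≥ 0 for all j ∈ {1,…,m} and x·y ≥ 0 for all x ∈ K; that is, K^* ∩ ℝ_+^m ≠ {0}. -/
/-- If a convex cone `K ⊆ ℝ^m` (with `m ≥ 1`) is disjoint from the strictly
negative orthant — i.e. every `x ∈ K` has some coordinate `x_j ≥ 0` — then there is a
nonzero vector `y` with all coordinates nonnegative such that `x·y ≥ 0` for all `x ∈ K`;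
that is, `K^* ∩ ℝ_+^m ≠ {0}`. -/
theorem stmt6 (m : ℕ) (hm : 0 < m) (K : Set (Fin m → ℝ))
    (hKadd : ∀ x ∈ K, ∀ x' ∈ K, x + x' ∈ K)
    (hKsmul : ∀ θ : ℝ, 0 ≤ θ → ∀ x ∈ K, θ • x ∈ K)
    (hdisj : ∀ x ∈ K, ∃ j : Fin m, 0 ≤ x j) :
    ∃ y : Fin m → ℝ, y ≠ 0 ∧ (∀ j, 0 ≤ y j) ∧ ∀ x ∈ K, 0 ≤ ∑ j, x j * y j := by
  haveI : NeZero m := ⟨hm.ne'⟩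
  rcases K.eq_empty_or_nonempty with hK | ⟨x₀, hx₀⟩
  · refine ⟨fun _ => 1, ?_, fun _ => zero_le_one, ?_⟩
    · intro h
      have := congrFun h ⟨0, hm⟩
      simpa using this
    · intro x hx; simp [hK] at hx
  -- 0 ∈ K
  have h0K : (0 : Fin m → ℝ) ∈ K := by
    have := hKsmul 0 le_rfl x₀ hx₀
    simpa using this
  -- the open negative orthant
  set s : Set (Fin m → ℝ) := Set.univ.pi (fun _ => Set.Iio (0:ℝ)) with hs
  have hs_open : IsOpen s := isOpen_set_pi Set.finite_univ (fun _ _ => isOpen_Iio)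
  have hs_conv : Convex ℝ s := convex_pi (fun _ _ => convex_Iio 0)
  have hK_conv : Convex ℝ K := by
    intro x hx x' hx' a b ha hb hab
    exact hKadd _ (hKsmul a ha x hx) _ (hKsmul b hb x' hx')
  have hdisjoint : Disjoint s K := by
    rw [Set.disjoint_left]
    intro x hxs hxK
    obtain ⟨j, hj⟩ := hdisj x hxK
    have := hxs j (Set.mem_univ j)
    simp only [Set.mem_Iio] at this
    linarith
  obtain ⟨f, u, hfs, hfK⟩ := geometric_hahn_banach_open hs_conv hs_open hK_conv hdisjoint
  have hu0 : u ≤ 0 := by simpa using hfK 0 h0K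
  -- membership of strictly negative vectors in s
  have mem_s : ∀ x : Fin m → ℝ, (∀ j, x j < 0) → x ∈ s := by
    intro x hx j _; exact hx j
  set y : Fin m → ℝ := fun j => f (Pi.single j 1) with hy
  set c : ℝ := f (fun _ => (1:ℝ)) with hc
  -- f x = ∑ x j * y j
  have hfx : ∀ x : Fin m → ℝ, f x = ∑ j, x j * y j := by
    intro x
    have hx : x = ∑ j, x j • (Pi.single j 1 : Fin m → ℝ) := by
      ext k
      simp [Pi.single_apply, Finset.sum_apply]
    conv_lhs => rw [hx]
    rw [map_sum]
    congr 1; ext j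
    simp [hy]
  have hc_sum : c = ∑ j, y j := by
    have := hfx (fun _ => 1)
    simpa [hc] using this
  -- y j ≥ 0
  have hy_nonneg : ∀ j, 0 ≤ y j := by
    intro j
    have key : ∀ ε : ℝ, 0 < ε → -(y j) - ε * c < 0 := by
      intro ε hε
      have hmem : (-(Pi.single j (1:ℝ)) - ε • (fun _ => (1:ℝ))) ∈ s := by
        apply mem_s
        intro k
        simp only [Pi.sub_apply, Pi.neg_apply, Pi.smul_apply, smul_eq_mul, mul_one,
          Pi.single_apply]
        by_cases h : k = j <;> simp [h] <;> linarith
      have := (hfs _ hmem).trans_le hu0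
      simpa [map_sub, map_neg, map_smul, hy, hc, smul_eq_mul] using this
    by_contra hneg
    push_neg at hneg
    rcases le_or_gt c 0 with hcle | hcgt
    · have := key 1 one_pos
      nlinarith
    · have := key (-(y j) / (2 * c)) (div_pos (by linarith) (by linarith))
      have h2 : -(y j) / (2 * c) * c = -(y j) / 2 := by field_simp
      rw [h2] at this
      linarith
  -- nonzero: sum of y is positive since f(-1) < u ≤ 0
  have hsum_pos : 0 < ∑ j, y j := by
    have hmem : (fun _ : Fin m => (-1:ℝ)) ∈ s := mem_s _ (fun _ => by norm_num)
    have h1 : f (fun _ => (-1:ℝ)) < 0 := (hfs _ hmem).trans_le hu0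
    have h2 : f (fun _ => (-1:ℝ)) = -c := by
      have : (fun _ : Fin m => (-1:ℝ)) = -(fun _ => (1:ℝ)) := by ext k; simp
      rw [this, map_neg, hc]
    rw [h2, hc_sum] at h1
    linarith
  refine ⟨y, ?_, hy_nonneg, ?_⟩
  · intro h
    rw [h] at hsum_pos
    simp at hsum_pos
  · intro x hx
    by_contra hlt
    push_neg at hlt
    rw [← hfx] at hlt
    -- scale x to violate the bound
    have hdiv : 0 ≤ u / f x := by
      rw [div_nonneg_iff]
      exact Or.inr ⟨hu0, hlt.le⟩
    have ht0 : (0:ℝ) ≤ u / f x + 1 := by linarith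
    have htx : (u / f x + 1) • x ∈ K := hKsmul _ ht0 x hx
    have := hfK _ htx
    rw [map_smul, smul_eq_mul] at this
    have hfx_ne : f x ≠ 0 := hlt.ne
    have h2 : (u / f x + 1) * f x = u + f x := by field_simp
    rw [h2] at this
    linarith
end

section
/- Let S ⊆ ℝ^m be any convex cone and let y_1, …, y_k ∈ ℝ^m. Then the following are equivalent: (1) for all x ∈ S, max(x·y_1, …, x·y_k) ≥ 0; (2) there exist λ_1 ≥ 0, …, λ_k ≥ 0 with ∑_i λ_i = 1 such that ∑_{i=1}^{k} λ_i·(x·y_i) ≥ 0 for all x ∈ S. -/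
/-! By Hahn–Banach, a functional `f` separates the open negative orthant of `ℝ^ι` from the
image of the cone under `x ↦ (x · y_i)_i`. Being bounded above on the orthant, `f` has
nonnegative coefficients; being bounded below on a cone, it is nonnegative on it. Normalizing the
coefficients gives the weights. Conversely, a convex combination of negative numbers is negative. -/

open Set Matrix

lemma nonpos_of_forall_pos_mul_le {a b : ℝ} (h : ∀ t, 0 < t → t * a ≤ b) : a ≤ 0 := by
  by_contra! ha
  have := h ((|b| + 1) / a) (by positivity)
  rw [div_mul_cancel₀ _ ha.ne'] at this
  linarith [le_abs_self b]

lemma ConvexCone.nonneg_of_forall_le {E : Type*} [AddCommGroup E] [Module ℝ E]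
    {C : ConvexCone ℝ E} {f : E →ₗ[ℝ] ℝ} {u : ℝ} (h : ∀ x ∈ C, u ≤ f x) {x : E} (hx : x ∈ C) :
    0 ≤ f x :=
  neg_nonpos.1 <| nonpos_of_forall_pos_mul_le (b := -u) fun t ht => by
    have := h _ (C.smul_mem ht hx)
    rw [map_smul, smul_eq_mul] at this
    linarith

variable {ι : Type*} [Fintype ι]

lemma nonneg_of_forall_neg_dotProduct_lt {v : ι → ℝ} {u : ℝ}
    (h : ∀ a : ι → ℝ, (∀ i, a i < 0) → v ⬝ᵥ a < u) (i : ι) : 0 ≤ v i := by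
  classical
  refine neg_nonpos.1 <| nonpos_of_forall_pos_mul_le (b := u + v ⬝ᵥ 1) fun t ht => ?_
  have := h (-(Pi.single i t + 1)) fun j => by
    rcases eq_or_ne j i with rfl | hj <;> simp [*]; linarith
  simp only [dotProduct_neg, dotProduct_add, dotProduct_single] at this
  linarith

lemma dotProduct_neg_of_mem_stdSimplex {w z : ι → ℝ} (hw : w ∈ stdSimplex ℝ ι)
    (hz : ∀ i, z i < 0) : w ⬝ᵥ z < 0 := by
  obtain ⟨i, -, hi⟩ := Finset.exists_lt_of_sum_lt (s := .univ) (f := 0) (g := w) (by simp [hw.2])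
  calc w ⬝ᵥ z < ∑ _ : ι, (0 : ℝ) :=
        Finset.sum_lt_sum (fun j _ => mul_nonpos_of_nonneg_of_nonpos (hw.1 j) (hz j).le)
          ⟨i, Finset.mem_univ i, mul_neg_of_pos_of_neg hi (hz i)⟩
    _ = 0 := Finset.sum_const_zero

theorem ConvexCone.exists_mem_stdSimplex_forall_dotProduct_nonneg (C : ConvexCone ℝ (ι → ℝ))
    (hC : (C : Set (ι → ℝ)).Nonempty) (h : ∀ z ∈ C, ∃ i, 0 ≤ z i) :
    ∃ w ∈ stdSimplex ℝ ι, ∀ z ∈ C, 0 ≤ w ⬝ᵥ z := by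
  have hdisj : Disjoint (univ.pi fun _ : ι => Iio (0 : ℝ)) C :=
    disjoint_left.2 fun z hz hzC => by
      obtain ⟨i, hi⟩ := h z hzC
      exact (hi.trans_lt (hz i (mem_univ i))).false
  obtain ⟨f, u, hfN, hfC⟩ := geometric_hahn_banach_open (convex_pi fun _ _ => convex_Iio 0)
    (isOpen_set_pi finite_univ fun _ _ => isOpen_Iio) C.convex hdisj
  classical
  set v := (dotProductEquiv ℝ ι).symm f.toLinearMap
  have hf : ∀ z, f z = v ⬝ᵥ z := fun z =>
    (LinearMap.congr_fun ((dotProductEquiv ℝ ι).apply_symm_apply f.toLinearMap) z).symm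
  have hv : ∀ i, 0 ≤ v i := nonneg_of_forall_neg_dotProduct_lt (u := u) fun a ha =>
    hf a ▸ hfN a fun i _ => ha i
  have hvC : ∀ z ∈ C, 0 ≤ v ⬝ᵥ z := fun z hz =>
    hf z ▸ C.nonneg_of_forall_le (f := f.toLinearMap) hfC hz
  -- `v ≠ 0`, since `f` separates `-1` from a point of `C`
  have hsum : 0 < ∑ i, v i := by
    obtain ⟨c, hc⟩ := hC
    refine (Finset.sum_nonneg fun i _ => hv i).lt_of_ne fun h0 => ?_
    have hv0 : v = 0 := funext fun i =>
      (Finset.sum_eq_zero_iff_of_nonneg fun i _ => hv i).1 h0.symm i (Finset.mem_univ i)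
    have := (hfN (-1) fun j _ => by simp).trans_le (hfC c hc)
    simp [hf, hv0] at this
  refine ⟨(∑ i, v i)⁻¹ • v, ⟨fun i => mul_nonneg (inv_nonneg.2 hsum.le) (hv i), ?_⟩, fun z hz => ?_⟩
  · simp [← Finset.mul_sum, hsum.ne']
  · rw [smul_dotProduct]
    exact smul_nonneg (inv_nonneg.2 hsum.le) (hvC z hz)

theorem ConvexCone.forall_exists_nonneg_iff_exists_mem_stdSimplex {E : Type*} [AddCommGroup E]
    [Module ℝ E] [Nonempty ι] (C : ConvexCone ℝ E) (L : E →ₗ[ℝ] ι → ℝ) :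
    (∀ x ∈ C, ∃ i, 0 ≤ L x i) ↔ ∃ w ∈ stdSimplex ℝ ι, ∀ x ∈ C, 0 ≤ w ⬝ᵥ L x := by
  constructor
  · intro h
    rcases (C : Set E).eq_empty_or_nonempty with hC | hC
    · classical
      refine ⟨Pi.single (Classical.arbitrary ι) 1, single_mem_stdSimplex ℝ _, fun x hx => ?_⟩
      simp [← SetLike.mem_coe, hC] at hx
    · obtain ⟨w, hw, hwC⟩ := (C.map L).exists_mem_stdSimplex_forall_dotProduct_nonneg
        (hC.image L) (by simpa using h)
      exact ⟨w, hw, fun x hx => hwC _ (mem_map.2 ⟨x, hx, rfl⟩)⟩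
  · rintro ⟨w, hw, hwC⟩ x hx
    by_contra! hneg
    exact (hwC x hx).not_gt (dotProduct_neg_of_mem_stdSimplex hw hneg)

/-- For any convex cone `S ⊆ ℝ^m` and `y_1, …, y_k ∈ ℝ^m` (k ≥ 1),
the max-inequality `max_i (x·y_i) ≥ 0` holds for all `x ∈ S` iff there are
`λ_1, …, λ_k ≥ 0` with `∑ λ_i = 1` such that `∑ i λ_i (x·y_i) ≥ 0` for all `x ∈ S`. -/
theorem stmt7 (m k : ℕ) (hk : 0 < k) (S : Set (Fin m → ℝ))
    (hSadd : ∀ x ∈ S, ∀ x' ∈ S, x + x' ∈ S)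
    (hSsmul : ∀ θ : ℝ, 0 ≤ θ → ∀ x ∈ S, θ • x ∈ S)
    (y : Fin k → Fin m → ℝ) :
    (∀ x ∈ S, ∃ i : Fin k, 0 ≤ ∑ j, x j * y i j) ↔
    (∃ lam : Fin k → ℝ, (∀ i, 0 ≤ lam i) ∧ (∑ i, lam i) = 1 ∧
      ∀ x ∈ S, 0 ≤ ∑ i, lam i * ∑ j, x j * y i j) := by
  have : Nonempty (Fin k) := ⟨⟨0, hk⟩⟩
  let C : ConvexCone ℝ (Fin m → ℝ) :=
    { carrier := S
      smul_mem' := fun c hc x hx => hSsmul c hc.le x hx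
      add_mem' := hSadd }
  -- `x ↦ (x · y_i)_i`
  have key := C.forall_exists_nonneg_iff_exists_mem_stdSimplex (Matrix.of y)ᵀ.vecMulLinear
  simp only [stdSimplex, mem_ofPred_eq, and_assoc] at key
  exact key
end

section
/- Let c_1, …, c_k, c ∈ ℝ^(2^n). Then the following are equivalent: (1) for all h ∈ cl Γ_n^*, if c_i·h ≥ 0 for all i ∈ {1,…,k} then c·h ≥ 0; (2) for every ε > 0 there exists λ ≥ 0 such that for all h ∈ cl Γ_n^*, if c_i·h ≥ 0 for all i ∈ {1,…,k−1} then c·h + ε·h(Fin n) ≥ λ·(c_k·h), where h(Fin n) denotes the value of h on the full set of all n indices. Moreover, if the set {c_1, …, c_k} has slack (there exists h ∈ cl Γ_n^* with c_i·h > 0 for all i), then in (2) one can take ε = 0, i.e. (1) is equivalent to: there exists λ ≥ 0 such that for all h ∈ cl Γ_n^*, if c_i·h ≥ 0 for all i ∈ {1,…,k−1} then c·h ≥ λ·(c_k·h). -/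
/-- The marginal probability `q_α(v)` of the joint outcome `v` of the variables in `α`. -/
noncomputable def marginalProb {n N : ℕ} (p : Fin N → ℝ) (X : Fin n → Fin N → ℕ)
    (α : Finset (Fin n)) (v : {i // i ∈ α} → ℕ) : ℝ :=
  ∑ ω ∈ Finset.univ.filter (fun ω => ∀ i : {i // i ∈ α}, X i.1 ω = v i), p ω

/-- The base-2 Shannon entropy of the joint marginal distribution on `α`. -/
noncomputable def entropyOn {n N : ℕ} (p : Fin N → ℝ) (X : Fin n → Fin N → ℕ)
    (α : Finset (Fin n)) : ℝ :=
  (∑' v : ({i // i ∈ α} → ℕ), Real.negMulLog (marginalProb p X α v)) / Real.log 2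

/-- `h : Finset (Fin n) → ℝ` is entropic if it is the entropy profile of `n` jointly
distributed random variables on a nonempty finite probability space. -/
def IsEntropic (n : ℕ) (h : Finset (Fin n) → ℝ) : Prop :=
  ∃ (N : ℕ) (p : Fin N → ℝ) (X : Fin n → Fin N → ℕ), 0 < N ∧
    (∀ ω, 0 ≤ p ω) ∧ (∑ ω, p ω) = 1 ∧ ∀ α, h α = entropyOn p X α

/-- The closed convex cone `cl Γ_n^*` of almost entropic vectors. -/
def almostEntropic (n : ℕ) : Set (Finset (Fin n) → ℝ) :=
  closure {h | IsEntropic n h}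

open Finset Real

section Ent

variable {Ω : Type*} [Fintype Ω] {S : Type*} [DecidableEq S]

noncomputable def prb (p : Ω → ℝ) (T : Ω → S) (s : S) : ℝ :=
  ∑ ω ∈ univ.filter (fun ω => T ω = s), p ω

noncomputable def ent (p : Ω → ℝ) (T : Ω → S) : ℝ :=
  ∑ s ∈ univ.image T, negMulLog (prb p T s)

lemma prb_nonneg {p : Ω → ℝ} (hp : ∀ ω, 0 ≤ p ω) (T : Ω → S) (s : S) : 0 ≤ prb p T s :=
  sum_nonneg fun ω _ => hp ω

lemma prb_eq_sum_ite (p : Ω → ℝ) (T : Ω → S) (s : S) :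
    prb p T s = ∑ ω, if T ω = s then p ω else 0 := by
  rw [prb, sum_filter]

lemma sum_prb {p : Ω → ℝ} (T : Ω → S) {A : Finset S} (hA : univ.image T ⊆ A) :
    ∑ s ∈ A, prb p T s = ∑ ω, p ω := by
  rw [← sum_fiberwise_of_maps_to (g := T) (fun ω _ => hA (mem_image_of_mem T (mem_univ ω))) p]
  rfl

lemma prb_le_one {p : Ω → ℝ} (hp : ∀ ω, 0 ≤ p ω) (hp1 : ∑ ω, p ω = 1) (T : Ω → S) (s : S) :
    prb p T s ≤ 1 := by
  rw [← hp1]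
  exact sum_le_sum_of_subset_of_nonneg (filter_subset _ _) (fun ω _ _ => hp ω)

lemma prb_eq_zero {p : Ω → ℝ} {T : Ω → S} {s : S} (h : s ∉ univ.image T) : prb p T s = 0 := by
  rw [prb, filter_eq_empty_iff.2 (fun {ω} _ hω => h (mem_image.2 ⟨ω, mem_univ ω, hω⟩)),
    sum_empty]

lemma ent_eq_sum_of_subset {p : Ω → ℝ} {T : Ω → S} {A : Finset S} (hA : univ.image T ⊆ A) :
    ent p T = ∑ s ∈ A, negMulLog (prb p T s) :=
  sum_subset hA (fun s _ hs => by rw [prb_eq_zero hs, negMulLog_zero])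

lemma ent_nonneg {p : Ω → ℝ} (hp : ∀ ω, 0 ≤ p ω) (hp1 : ∑ ω, p ω = 1) (T : Ω → S) :
    0 ≤ ent p T :=
  sum_nonneg fun s _ => negMulLog_nonneg (prb_nonneg hp T s) (prb_le_one hp hp1 T s)

lemma ent_const {p : Ω → ℝ} (hp1 : ∑ ω, p ω = 1) {T : Ω → S} {s₀ : S}
    (hT : ∀ ω, T ω = s₀) : ent p T = 0 := by
  have h1 : univ.image T ⊆ {s₀} := by
    intro s hs
    obtain ⟨ω, _, rfl⟩ := mem_image.1 hs
    simp [hT ω]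
  rw [ent_eq_sum_of_subset h1, sum_singleton]
  have : prb p T s₀ = 1 := by
    rw [prb, filter_true_of_mem (fun ω _ => hT ω), hp1]
  rw [this, negMulLog_one]

lemma ent_map {Ω' : Type*} [Fintype Ω'] (e : Ω' ≃ Ω) (p : Ω → ℝ) (T : Ω → S) :
    ent (p ∘ e) (T ∘ e) = ent p T := by
  have hprb : ∀ s, prb (p ∘ e) (T ∘ e) s = prb p T s := by
    intro s
    rw [prb_eq_sum_ite, prb_eq_sum_ite]
    exact Fintype.sum_equiv e _ _ (fun ω => rfl)
  have himg : univ.image (T ∘ e) = univ.image T := by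
    ext s
    simp only [mem_image, mem_univ, true_and, Function.comp_apply]
    exact ⟨fun ⟨ω', hω'⟩ => ⟨e ω', hω'⟩, fun ⟨ω, hω⟩ => ⟨e.symm ω, by simpa using hω⟩⟩
  rw [ent, ent, himg]
  exact sum_congr rfl fun s _ => by rw [hprb]

lemma ent_comp_inj {S' : Type*} [DecidableEq S'] {φ : S → S'} (hφ : Function.Injective φ)
    (p : Ω → ℝ) (T : Ω → S) : ent p (φ ∘ T) = ent p T := by
  have hprb : ∀ s, prb p (φ ∘ T) (φ s) = prb p T s := by
    intro s
    rw [prb, prb]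
    congr 1
    exact filter_congr fun ω _ => by simp [hφ.eq_iff]
  have himg : univ.image (φ ∘ T) = (univ.image T).image φ := by
    rw [Finset.image_image]
  rw [ent, himg, sum_image (fun a _ b _ h => hφ h), ent]
  exact sum_congr rfl fun s _ => by rw [hprb]

lemma negMulLog_add_le {a b : ℝ} (ha : 0 ≤ a) (hb : 0 ≤ b) :
    negMulLog (a + b) ≤ negMulLog a + negMulLog b := by
  rcases ha.eq_or_lt with h | ha'
  · simp [← h]
  rcases hb.eq_or_lt with h | hb'
  · simp [← h]
  have h1 : Real.log a ≤ Real.log (a + b) := Real.log_le_log ha' (by linarith)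
  have h2 : Real.log b ≤ Real.log (a + b) := Real.log_le_log hb' (by linarith)
  simp only [negMulLog]
  nlinarith

lemma negMulLog_sum_le {ι : Type*} (s : Finset ι) (f : ι → ℝ) (hf : ∀ i ∈ s, 0 ≤ f i) :
    negMulLog (∑ i ∈ s, f i) ≤ ∑ i ∈ s, negMulLog (f i) := by
  induction s using Finset.cons_induction with
  | empty => simp
  | cons a s ha ih =>
    rw [sum_cons, sum_cons]
    calc negMulLog (f a + ∑ i ∈ s, f i) ≤ negMulLog (f a) + negMulLog (∑ i ∈ s, f i) :=
          negMulLog_add_le (hf a (mem_cons_self a s))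
            (sum_nonneg fun i hi => hf i (mem_cons_of_mem hi))
      _ ≤ _ := by
          have := ih (fun i hi => hf i (mem_cons_of_mem hi))
          linarith

lemma prb_comp {S' : Type*} [DecidableEq S'] (φ : S → S') (p : Ω → ℝ) (T : Ω → S) (s' : S') :
    prb p (φ ∘ T) s' = ∑ s ∈ (univ.image T).filter (fun s => φ s = s'), prb p T s := by
  rw [sum_filter]
  have : ∀ s ∈ univ.image T,
      (if φ s = s' then prb p T s else 0) = ∑ ω ∈ univ.filter (fun ω => T ω = s),
        (if φ (T ω) = s' then p ω else 0) := by
    intro s _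
    by_cases h : φ s = s'
    · rw [if_pos h, prb]
      exact sum_congr rfl fun ω hω => by
        rw [if_pos]
        rw [(mem_filter.1 hω).2, h]
    · rw [if_neg h]
      refine (sum_eq_zero fun ω hω => ?_).symm
      rw [if_neg]
      rw [(mem_filter.1 hω).2]
      exact h
  rw [sum_congr rfl this,
    sum_fiberwise_of_maps_to (g := T) (fun ω _ => mem_image_of_mem T (mem_univ ω)),
    prb_eq_sum_ite]
  rfl

lemma ent_comp_le {S' : Type*} [DecidableEq S'] (φ : S → S') {p : Ω → ℝ}
    (hp : ∀ ω, 0 ≤ p ω) (T : Ω → S) : ent p (φ ∘ T) ≤ ent p T := by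
  have step1 : ent p (φ ∘ T) ≤ ∑ s' ∈ univ.image (φ ∘ T),
      ∑ s ∈ (univ.image T).filter (fun s => φ s = s'), negMulLog (prb p T s) := by
    refine sum_le_sum fun s' _ => ?_
    rw [prb_comp]
    exact negMulLog_sum_le _ _ (fun s _ => prb_nonneg hp T s)
  refine step1.trans ?_
  rw [ent, sum_fiberwise_of_maps_to (g := φ) ?_]
  intro s hs
  obtain ⟨ω, _, rfl⟩ := mem_image.1 hs
  exact mem_image_of_mem (φ ∘ T) (mem_univ ω)

end Ent

section EntProd

open Finset Real

variable {Ω : Type*} [Fintype Ω] {Ω' : Type*} [Fintype Ω']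
  {S : Type*} [DecidableEq S] {S' : Type*} [DecidableEq S']

lemma prb_prod (p : Ω → ℝ) (q : Ω' → ℝ) (T : Ω → S) (U : Ω' → S') (s : S) (s' : S') :
    prb (fun x : Ω × Ω' => p x.1 * q x.2) (fun x => (T x.1, U x.2)) (s, s') =
      prb p T s * prb q U s' := by
  rw [prb_eq_sum_ite, prb_eq_sum_ite, prb_eq_sum_ite, Fintype.sum_prod_type, Finset.sum_mul_sum]
  refine Finset.sum_congr rfl fun ω _ => Finset.sum_congr rfl fun ω' _ => ?_
  by_cases h1 : T ω = s <;> by_cases h2 : U ω' = s' <;> simp [h1, h2, Prod.ext_iff]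

lemma ent_prod {p : Ω → ℝ} {q : Ω' → ℝ} (hp : ∀ ω, 0 ≤ p ω) (hp1 : ∑ ω, p ω = 1)
    (hq : ∀ ω, 0 ≤ q ω) (hq1 : ∑ ω, q ω = 1) (T : Ω → S) (U : Ω' → S') :
    ent (fun x : Ω × Ω' => p x.1 * q x.2) (fun x => (T x.1, U x.2)) = ent p T + ent q U := by
  have hsub : univ.image (fun x : Ω × Ω' => (T x.1, U x.2)) ⊆
      (univ.image T) ×ˢ (univ.image U) := by
    intro z hz
    obtain ⟨x, _, rfl⟩ := mem_image.1 hz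
    exact mem_product.2 ⟨mem_image_of_mem _ (mem_univ _), mem_image_of_mem _ (mem_univ _)⟩
  rw [ent_eq_sum_of_subset hsub, Finset.sum_product]
  have : ∀ s ∈ univ.image T, ∀ s' ∈ univ.image U,
      negMulLog (prb (fun x : Ω × Ω' => p x.1 * q x.2) (fun x => (T x.1, U x.2)) (s, s')) =
      prb q U s' * negMulLog (prb p T s) + prb p T s * negMulLog (prb q U s') := by
    intro s _ s' _
    rw [prb_prod, negMulLog_mul]
  calc ∑ s ∈ univ.image T, ∑ s' ∈ univ.image U,
        negMulLog (prb (fun x : Ω × Ω' => p x.1 * q x.2) (fun x => (T x.1, U x.2)) (s, s'))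
      = ∑ s ∈ univ.image T, ∑ s' ∈ univ.image U,
        (prb q U s' * negMulLog (prb p T s) + prb p T s * negMulLog (prb q U s')) :=
        Finset.sum_congr rfl fun s hs => Finset.sum_congr rfl fun s' hs' => this s hs s' hs'
    _ = ent p T + ent q U := by
        simp only [Finset.sum_add_distrib, ← Finset.sum_mul, ← Finset.mul_sum]
        rw [sum_prb U (subset_refl _), hq1, sum_prb T (subset_refl _), hp1, ent, ent]
        ring

lemma prb_dilute (t : ℝ) (p : Ω → ℝ) (T : Ω → S) (s : S) :
    prb (fun o : Option Ω => o.elim (1 - t) (fun ω => t * p ω)) (Option.map T) (some s)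
      = t * prb p T s := by
  rw [prb_eq_sum_ite, prb_eq_sum_ite, Fintype.sum_option]
  simp only [Option.map_none, Option.map_some, Option.elim, Option.some.injEq]
  rw [if_neg (by simp)]
  rw [Finset.mul_sum]
  rw [zero_add]
  exact Finset.sum_congr rfl fun ω _ => by by_cases h : T ω = s <;> simp [h]

lemma prb_dilute_none (t : ℝ) (p : Ω → ℝ) (T : Ω → S) :
    prb (fun o : Option Ω => o.elim (1 - t) (fun ω => t * p ω)) (Option.map T) none
      = 1 - t := by
  rw [prb_eq_sum_ite, Fintype.sum_option]
  simp

lemma ent_dilute (t : ℝ) {p : Ω → ℝ} (hp1 : ∑ ω, p ω = 1) (T : Ω → S) :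
    ent (fun o : Option Ω => o.elim (1 - t) (fun ω => t * p ω)) (Option.map T)
      = t * ent p T + negMulLog t + negMulLog (1 - t) := by
  have hsub : univ.image (Option.map T) ⊆ insert none ((univ.image T).image some) := by
    intro z hz
    obtain ⟨o, _, rfl⟩ := mem_image.1 hz
    cases o with
    | none => exact mem_insert_self _ _
    | some ω => exact mem_insert_of_mem (mem_image_of_mem some (mem_image_of_mem T (mem_univ ω)))
  rw [ent_eq_sum_of_subset hsub, Finset.sum_insert (by simp),
    Finset.sum_image (fun a _ b _ h => Option.some_injective S h), prb_dilute_none]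
  have : ∀ s ∈ univ.image T,
      negMulLog (prb (fun o : Option Ω => o.elim (1 - t) (fun ω => t * p ω))
        (Option.map T) (some s)) = prb p T s * negMulLog t + t * negMulLog (prb p T s) := by
    intro s _
    rw [prb_dilute, negMulLog_mul]
  rw [Finset.sum_congr rfl this]
  simp only [Finset.sum_add_distrib, ← Finset.sum_mul, ← Finset.mul_sum]
  rw [sum_prb T (subset_refl _), hp1, ent]
  ring

end EntProd

section Bridge

open Finset Real

variable {n N : ℕ}

/-- The tuple of values of the variables in `α`. -/
def tup (X : Fin n → Fin N → ℕ) (α : Finset (Fin n)) (ω : Fin N) : {i // i ∈ α} → ℕ :=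
  fun i => X i.1 ω

lemma marginalProb_eq_prb (p : Fin N → ℝ) (X : Fin n → Fin N → ℕ) (α : Finset (Fin n))
    (v : {i // i ∈ α} → ℕ) : marginalProb p X α v = prb p (tup X α) v := by
  rw [marginalProb, prb]
  congr 1
  exact filter_congr fun ω _ => by
    constructor
    · intro h; funext i; exact h i
    · intro h i; rw [← h]; rfl

lemma entropyOn_eq_ent (p : Fin N → ℝ) (X : Fin n → Fin N → ℕ) (α : Finset (Fin n)) :
    entropyOn p X α = ent p (tup X α) / Real.log 2 := by
  rw [entropyOn, ent]
  congr 1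
  rw [tsum_eq_sum (s := univ.image (tup X α))
    (fun v hv => by rw [marginalProb_eq_prb, prb_eq_zero hv, negMulLog_zero])]
  exact sum_congr rfl fun v _ => by rw [marginalProb_eq_prb]

lemma entropyOn_nonneg {p : Fin N → ℝ} (hp : ∀ ω, 0 ≤ p ω) (hp1 : ∑ ω, p ω = 1)
    (X : Fin n → Fin N → ℕ) (α : Finset (Fin n)) : 0 ≤ entropyOn p X α := by
  rw [entropyOn_eq_ent]
  exact div_nonneg (ent_nonneg hp hp1 _) (Real.log_nonneg one_le_two)

lemma entropyOn_le_univ {p : Fin N → ℝ} (hp : ∀ ω, 0 ≤ p ω)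
    (X : Fin n → Fin N → ℕ) (α : Finset (Fin n)) :
    entropyOn p X α ≤ entropyOn p X Finset.univ := by
  rw [entropyOn_eq_ent, entropyOn_eq_ent]
  have key : ent p (tup X α) ≤ ent p (tup X Finset.univ) := by
    have : tup X α = (fun (w : {i // i ∈ (Finset.univ : Finset (Fin n))} → ℕ) =>
        (fun i : {i // i ∈ α} => w ⟨i.1, Finset.mem_univ i.1⟩)) ∘ tup X Finset.univ := rfl
    rw [this]
    exact ent_comp_le _ hp _
  exact div_le_div_of_nonneg_right key (Real.log_pos one_lt_two).le

lemma entropyOn_empty {p : Fin N → ℝ} (hp1 : ∑ ω, p ω = 1) (X : Fin n → Fin N → ℕ) :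
    entropyOn p X (∅ : Finset (Fin n)) = 0 := by
  rw [entropyOn_eq_ent]
  have : ent p (tup X ∅) = 0 := by
    refine ent_const hp1 (s₀ := fun i => 0) ?_
    intro ω
    funext i
    exact absurd i.2 (Finset.notMem_empty i.1)
  rw [this, zero_div]

end Bridge

section Constructions

open Finset Real

variable {n : ℕ}

lemma isEntropic_zero : IsEntropic n (fun _ => 0) := by
  refine ⟨1, fun _ => 1, fun _ _ => 0, one_pos, fun _ => zero_le_one, by simp, fun α => ?_⟩
  rw [entropyOn_eq_ent]
  have : ent (fun _ : Fin 1 => (1 : ℝ)) (tup (fun _ _ => 0) α) = 0 :=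
    ent_const (by simp) (s₀ := fun _ => 0) (fun ω => rfl)
  rw [this, zero_div]

lemma isEntropic_add {h g : Finset (Fin n) → ℝ} (hh : IsEntropic n h) (hg : IsEntropic n g) :
    IsEntropic n (fun α => h α + g α) := by
  obtain ⟨N, p, X, hN, hp, hp1, hX⟩ := hh
  obtain ⟨M, q, Y, hM, hq, hq1, hY⟩ := hg
  refine ⟨N * M, fun ω => p (finProdFinEquiv.symm ω).1 * q (finProdFinEquiv.symm ω).2,
    fun i ω => Nat.pair (X i (finProdFinEquiv.symm ω).1) (Y i (finProdFinEquiv.symm ω).2),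
    Nat.mul_pos hN hM, fun ω => mul_nonneg (hp _) (hq _), ?_, fun α => ?_⟩
  · rw [Fintype.sum_equiv finProdFinEquiv.symm _ (fun x : Fin N × Fin M => p x.1 * q x.2)
      (fun ω => rfl), Fintype.sum_prod_type]
    simp only [← Finset.mul_sum, ← Finset.sum_mul, hq1, hp1, mul_one]
  · show h α + g α = _
    rw [hX α, hY α, entropyOn_eq_ent, entropyOn_eq_ent, entropyOn_eq_ent, ← add_div]
    congr 1
    set φ : (({i // i ∈ α} → ℕ) × ({i // i ∈ α} → ℕ)) → ({i // i ∈ α} → ℕ) :=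
      fun uv => fun i => Nat.pair (uv.1 i) (uv.2 i) with hφdef
    have hφ : Function.Injective φ := by
      intro a b hab
      refine Prod.ext (funext fun i => ?_) (funext fun i => ?_)
      · exact (Nat.pair_eq_pair.1 (congrFun hab i)).1
      · exact (Nat.pair_eq_pair.1 (congrFun hab i)).2
    refine Eq.symm ?_
    calc ent (fun ω => p (finProdFinEquiv.symm ω).1 * q (finProdFinEquiv.symm ω).2)
          (tup (fun i ω => Nat.pair (X i (finProdFinEquiv.symm ω).1)
            (Y i (finProdFinEquiv.symm ω).2)) α)
        = ent ((fun x : Fin N × Fin M => p x.1 * q x.2) ∘ finProdFinEquiv.symm)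
          ((φ ∘ (fun x : Fin N × Fin M => (tup X α x.1, tup Y α x.2))) ∘ finProdFinEquiv.symm)
          := rfl
      _ = ent (fun x : Fin N × Fin M => p x.1 * q x.2)
          (φ ∘ (fun x : Fin N × Fin M => (tup X α x.1, tup Y α x.2))) :=
          ent_map finProdFinEquiv.symm _ _
      _ = ent (fun x : Fin N × Fin M => p x.1 * q x.2)
          (fun x : Fin N × Fin M => (tup X α x.1, tup Y α x.2)) := ent_comp_inj hφ _ _
      _ = ent p (tup X α) + ent q (tup Y α) := ent_prod hp hp1 hq hq1 _ _

/-- The binary entropy correction appearing in the dilution construction. -/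
noncomputable def binEnt (t : ℝ) : ℝ := (Real.negMulLog t + Real.negMulLog (1 - t)) / Real.log 2

lemma binEnt_continuous : Continuous binEnt :=
  ((Real.continuous_negMulLog).add
    ((Real.continuous_negMulLog).comp (continuous_const.sub continuous_id))).div_const _

lemma binEnt_zero : binEnt 0 = 0 := by simp [binEnt]

lemma isEntropic_dilute {h : Finset (Fin n) → ℝ} (hh : IsEntropic n h) {t : ℝ}
    (ht0 : 0 < t) (ht1 : t < 1) :
    IsEntropic n (fun α => t * h α + if α = ∅ then 0 else binEnt t) := by
  obtain ⟨N, p, X, hN, hp, hp1, hX⟩ := hh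
  set e := finSuccEquiv N with he
  set P' : Option (Fin N) → ℝ := fun o => o.elim (1 - t) (fun ω => t * p ω) with hP'
  refine ⟨N + 1, P' ∘ e, fun i ω => (e ω).elim 0 (fun a => X i a + 1), N.succ_pos,
    ?_, ?_, fun α => ?_⟩
  · intro ω
    rcases hcase : e ω with _ | a <;>
      simp only [Function.comp_apply, hcase, hP', Option.elim]
    · linarith
    · exact mul_nonneg ht0.le (hp a)
  · simp only [Function.comp_apply]
    rw [Fintype.sum_equiv e _ P' (fun ω => rfl), Fintype.sum_option]
    simp only [hP', Option.elim, ← Finset.mul_sum, hp1]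
    ring
  · show t * h α + (if α = ∅ then 0 else binEnt t) = _
    by_cases hα : α = ∅
    · subst hα
      rw [entropyOn_empty ?hsum, hX ∅, entropyOn_empty hp1, if_pos rfl, mul_zero, add_zero]
      case hsum =>
        simp only [Function.comp_apply]
        rw [Fintype.sum_equiv e _ P' (fun ω => rfl), Fintype.sum_option]
        simp only [hP', Option.elim, ← Finset.mul_sum, hp1]
        ring
    · obtain ⟨j0, hj0⟩ := Finset.nonempty_iff_ne_empty.2 hα
      rw [if_neg hα, entropyOn_eq_ent, hX α, entropyOn_eq_ent]
      set ψ : Option ({i // i ∈ α} → ℕ) → ({i // i ∈ α} → ℕ) :=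
        fun o => o.elim (fun _ => 0) (fun u i => u i + 1) with hψdef
      have hψ : Function.Injective ψ := by
        intro a b hab
        cases a with
        | none => cases b with
          | none => rfl
          | some u => exact absurd (congrFun hab ⟨j0, hj0⟩) (by simp [hψdef])
        | some u => cases b with
          | none => exact absurd (congrFun hab ⟨j0, hj0⟩) (by simp [hψdef])
          | some u' =>
            simp only [hψdef, Option.elim, Option.some.injEq]
            funext i
            have := congrFun hab i
            simp only [hψdef, Option.elim] at this
            omega
      have htup : tup (fun i ω => (e ω).elim 0 (fun a => X i a + 1)) α
          = (ψ ∘ Option.map (tup X α)) ∘ e := by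
        funext ω
        funext i
        rcases hcase : e ω with _ | a <;>
          simp [tup, hcase, hψdef, Function.comp]
      rw [htup]
      have key : ent (P' ∘ e) ((ψ ∘ Option.map (tup X α)) ∘ e)
          = t * ent p (tup X α) + negMulLog t + negMulLog (1 - t) := by
        rw [ent_map e P' (ψ ∘ Option.map (tup X α)), ent_comp_inj hψ P' (Option.map (tup X α))]
        exact ent_dilute t hp1 (tup X α)
      rw [key, binEnt]
      have hL : Real.log 2 ≠ 0 := (Real.log_pos one_lt_two).ne'
      field_simp
      ring

end Constructions

section Cone

open Finset Real Filter

variable {n : ℕ}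

lemma mem_almostEntropic_of_isEntropic {h : Finset (Fin n) → ℝ} (hh : IsEntropic n h) :
    h ∈ almostEntropic n := subset_closure hh

lemma almostEntropic_isClosed : IsClosed (almostEntropic n) := isClosed_closure

lemma almostEntropic_add {a b : Finset (Fin n) → ℝ} (ha : a ∈ almostEntropic n)
    (hb : b ∈ almostEntropic n) : (fun α => a α + b α) ∈ almostEntropic n := by
  obtain ⟨u, hu, hut⟩ := mem_closure_iff_seq_limit.1 ha
  obtain ⟨v, hv, hvt⟩ := mem_closure_iff_seq_limit.1 hb
  refine mem_closure_of_tendsto (f := fun m : ℕ => fun α => u m α + v m α) (b := atTop) ?_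
    (Filter.Eventually.of_forall fun m => isEntropic_add (hu m) (hv m))
  rw [tendsto_pi_nhds]
  intro α
  exact ((tendsto_pi_nhds.1 hut) α).add ((tendsto_pi_nhds.1 hvt) α)

lemma almostEntropic_nsmul {a : Finset (Fin n) → ℝ} (ha : a ∈ almostEntropic n) (m : ℕ) :
    (fun α => ((m : ℝ) + 1) * a α) ∈ almostEntropic n := by
  induction m with
  | zero => simpa using ha
  | succ m ih =>
    have : (fun α => (((m + 1 : ℕ) : ℝ) + 1) * a α)
        = fun α => (fun α => ((m : ℝ) + 1) * a α) α + a α := by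
      funext α; push_cast; ring
    rw [this]
    exact almostEntropic_add ih ha

lemma isEntropic_nsmul {g : Finset (Fin n) → ℝ} (hg : IsEntropic n g) (m : ℕ) :
    IsEntropic n (fun α => ((m : ℝ) + 1) * g α) := by
  induction m with
  | zero => simpa using hg
  | succ m ih =>
    have : (fun α => (((m + 1 : ℕ) : ℝ) + 1) * g α)
        = fun α => (((m : ℝ) + 1) * g α) + g α := by
      funext α; push_cast; ring
    rw [this]
    exact isEntropic_add ih hg

lemma smul_isEntropic_mem {g : Finset (Fin n) → ℝ} (hg : IsEntropic n g) {s : ℝ}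
    (hs0 : 0 < s) (hs1 : s < 1) : (fun α => s * g α) ∈ almostEntropic n := by
  have hent : ∀ m : ℕ, IsEntropic n
      (fun α => (s / ((m : ℝ) + 1)) * (((m : ℝ) + 1) * g α)
        + if α = ∅ then 0 else binEnt (s / ((m : ℝ) + 1))) := by
    intro m
    have hm1 : (0 : ℝ) < (m : ℝ) + 1 := by positivity
    refine isEntropic_dilute (isEntropic_nsmul hg m) (div_pos hs0 hm1) ?_
    calc s / ((m : ℝ) + 1) ≤ s / 1 := by
          apply div_le_div_of_nonneg_left hs0.le one_pos
          linarith
      _ < 1 := by rw [div_one]; exact hs1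
  refine mem_closure_of_tendsto (f := fun m : ℕ => fun α =>
    (s / ((m : ℝ) + 1)) * (((m : ℝ) + 1) * g α)
      + if α = ∅ then 0 else binEnt (s / ((m : ℝ) + 1))) (b := atTop) ?_
    (Filter.Eventually.of_forall fun m => hent m)
  rw [tendsto_pi_nhds]
  intro α
  have hsimp : ∀ m : ℕ, (s / ((m : ℝ) + 1)) * (((m : ℝ) + 1) * g α)
      + (if α = ∅ then 0 else binEnt (s / ((m : ℝ) + 1)))
      = s * g α + (if α = ∅ then 0 else binEnt (s / ((m : ℝ) + 1))) := by
    intro m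
    have hm1 : ((m : ℝ) + 1) ≠ 0 := by positivity
    have h2 : (s / ((m : ℝ) + 1)) * (((m : ℝ) + 1) * g α) = s * g α := by
      field_simp
      try ring
    rw [h2]
  simp only [hsimp]
  have hdiv : Tendsto (fun m : ℕ => s / ((m : ℝ) + 1)) atTop (nhds 0) := by
    have := tendsto_const_div_atTop_nhds_zero_nat s
    have h2 : Tendsto (fun m : ℕ => ((m : ℝ) + 1)) atTop atTop :=
      tendsto_atTop_add_const_right _ 1 tendsto_natCast_atTop_atTop
    exact Tendsto.div_atTop tendsto_const_nhds h2
  by_cases hα : α = ∅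
  · simp only [if_pos hα, add_zero]
    exact tendsto_const_nhds
  · simp only [if_neg hα]
    have : Tendsto (fun m : ℕ => binEnt (s / ((m : ℝ) + 1))) atTop (nhds 0) := by
      have := (binEnt_continuous.tendsto 0).comp hdiv
      rwa [binEnt_zero] at this
    simpa using tendsto_const_nhds.add this

lemma almostEntropic_smul_le_one {a : Finset (Fin n) → ℝ} (ha : a ∈ almostEntropic n) {s : ℝ}
    (hs0 : 0 < s) (hs1 : s ≤ 1) : (fun α => s * a α) ∈ almostEntropic n := by
  rcases hs1.lt_or_eq with hs | hs
  · obtain ⟨u, hu, hut⟩ := mem_closure_iff_seq_limit.1 ha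
    have hmem : ∀ m, (fun α => s * u m α) ∈ almostEntropic n :=
      fun m => smul_isEntropic_mem (hu m) hs0 hs
    have ht : Filter.Tendsto (fun m : ℕ => fun α => s * u m α) Filter.atTop
        (nhds (fun α => s * a α)) := by
      rw [tendsto_pi_nhds]
      intro α
      exact ((tendsto_pi_nhds.1 hut) α).const_mul s
    exact almostEntropic_isClosed.mem_of_tendsto ht (Filter.Eventually.of_forall hmem)
  · subst hs
    simpa using ha

lemma almostEntropic_smul {a : Finset (Fin n) → ℝ} (ha : a ∈ almostEntropic n) {s : ℝ}
    (hs0 : 0 < s) : (fun α => s * a α) ∈ almostEntropic n := by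
  rcases le_or_gt s 1 with hs | hs
  · exact almostEntropic_smul_le_one ha hs0 hs
  · set m : ℕ := ⌈s⌉₊ - 1 with hm
    have hceil : (0 : ℝ) < ⌈s⌉₊ := by
      have : (0:ℕ) < ⌈s⌉₊ := Nat.ceil_pos.2 hs0
      exact_mod_cast this
    have hmm : ((m : ℝ) + 1) = (⌈s⌉₊ : ℝ) := by
      have : 1 ≤ ⌈s⌉₊ := Nat.ceil_pos.2 hs0
      rw [hm]
      push_cast [Nat.cast_sub this]
      ring
    have hsm : s ≤ (m : ℝ) + 1 := by rw [hmm]; exact Nat.le_ceil s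
    have hma : (fun α => ((m : ℝ) + 1) * a α) ∈ almostEntropic n := almostEntropic_nsmul ha m
    have hdiv0 : 0 < s / ((m : ℝ) + 1) := div_pos hs0 (by positivity)
    have hdiv1 : s / ((m : ℝ) + 1) ≤ 1 := by
      rw [div_le_one (by positivity)]
      exact hsm
    have := almostEntropic_smul_le_one hma hdiv0 hdiv1
    have heq : (fun α => (s / ((m : ℝ) + 1)) * (((m : ℝ) + 1) * a α)) = fun α => s * a α := by
      funext α
      have : ((m : ℝ) + 1) ≠ 0 := by positivity
      field_simp
      try ring
    rwa [heq] at this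

lemma almostEntropic_nonneg {a : Finset (Fin n) → ℝ} (ha : a ∈ almostEntropic n)
    (α : Finset (Fin n)) : 0 ≤ a α := by
  have hsub : {h : Finset (Fin n) → ℝ | IsEntropic n h} ⊆ {h | 0 ≤ h α} := by
    rintro h ⟨N, p, X, hN, hp, hp1, hX⟩
    rw [Set.mem_setOf_eq, hX α]
    exact entropyOn_nonneg hp hp1 X α
  exact closure_minimal hsub (isClosed_le continuous_const (continuous_apply α)) ha

lemma almostEntropic_le_univ {a : Finset (Fin n) → ℝ} (ha : a ∈ almostEntropic n)
    (α : Finset (Fin n)) : a α ≤ a Finset.univ := by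
  have hsub : {h : Finset (Fin n) → ℝ | IsEntropic n h} ⊆ {h | h α ≤ h Finset.univ} := by
    rintro h ⟨N, p, X, hN, hp, hp1, hX⟩
    rw [Set.mem_setOf_eq, hX α, hX Finset.univ]
    exact entropyOn_le_univ hp X α
  exact closure_minimal hsub (isClosed_le (continuous_apply α) (continuous_apply _)) ha

lemma almostEntropic_zero : (fun _ => (0:ℝ) : Finset (Fin n) → ℝ) ∈ almostEntropic n :=
  mem_almostEntropic_of_isEntropic isEntropic_zero

lemma almostEntropic_comb {a b : Finset (Fin n) → ℝ} (ha : a ∈ almostEntropic n)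
    (hb : b ∈ almostEntropic n) {θ : ℝ} (h0 : 0 ≤ θ) (h1 : θ ≤ 1) :
    (fun α => θ * a α + (1 - θ) * b α) ∈ almostEntropic n := by
  rcases h0.eq_or_lt with h | h0'
  · simp only [← h, zero_mul, zero_add, sub_zero, one_mul]
    exact hb
  rcases h1.eq_or_lt with h | h1'
  · simp only [h, one_mul, sub_self, zero_mul, add_zero]
    exact ha
  exact almostEntropic_add (almostEntropic_smul ha h0') (almostEntropic_smul hb (by linarith))

end Cone

section Separation

open Finset

variable {n : ℕ}

/-- Key mixing inequality: ratios on the `g < 0, f ≤ 0` side are dominated by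
ratios on the `g > 0` side. -/
lemma ratio_le {S : Set (Finset (Fin n) → ℝ)} {f g : (Finset (Fin n) → ℝ) → ℝ}
    (mix : ∀ a ∈ S, ∀ b ∈ S, ∀ θ : ℝ, 0 ≤ θ → θ ≤ 1 →
      (fun α => θ * a α + (1 - θ) * b α) ∈ S)
    (faff : ∀ a b : Finset (Fin n) → ℝ, ∀ θ : ℝ,
      f (fun α => θ * a α + (1 - θ) * b α) = θ * f a + (1 - θ) * f b)
    (gaff : ∀ a b : Finset (Fin n) → ℝ, ∀ θ : ℝ,
      g (fun α => θ * a α + (1 - θ) * b α) = θ * g a + (1 - θ) * g b)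
    (hfg : ∀ h ∈ S, 0 ≤ g h → 0 ≤ f h)
    {a b : Finset (Fin n) → ℝ} (ha : a ∈ S) (hb : b ∈ S)
    (hga : g a < 0) (hgb : 0 < g b) : f a / g a ≤ f b / g b := by
  set θ : ℝ := g b / (g b - g a) with hθ
  have hden : 0 < g b - g a := by linarith
  have hθ0 : 0 ≤ θ := le_of_lt (div_pos hgb hden)
  have hθ1 : θ ≤ 1 := by
    rw [hθ, div_le_one hden]
    linarith
  have hm : (fun α => θ * a α + (1 - θ) * b α) ∈ S := mix a ha b hb θ hθ0 hθ1
  have hgm : g (fun α => θ * a α + (1 - θ) * b α) = 0 := by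
    rw [gaff, hθ]
    field_simp
    ring
  have hfm : 0 ≤ f (fun α => θ * a α + (1 - θ) * b α) := hfg _ hm (le_of_eq hgm.symm)
  rw [faff] at hfm
  have key : 0 ≤ g b * f a - g a * f b := by
    have h1 : 0 ≤ (θ * f a + (1 - θ) * f b) * (g b - g a) :=
      mul_nonneg hfm hden.le
    have h2 : (θ * f a + (1 - θ) * f b) * (g b - g a) = g b * f a - g a * f b := by
      rw [hθ]
      field_simp
      ring
    linarith [h2 ▸ h1]
  rw [div_le_iff_of_neg hga, div_mul_eq_mul_div, div_le_iff₀ hgb]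
  linarith

/-- Abstract separation: existence of a multiplier `lam`. -/
lemma sep {S : Set (Finset (Fin n) → ℝ)} {f g : (Finset (Fin n) → ℝ) → ℝ}
    (mix : ∀ a ∈ S, ∀ b ∈ S, ∀ θ : ℝ, 0 ≤ θ → θ ≤ 1 →
      (fun α => θ * a α + (1 - θ) * b α) ∈ S)
    (faff : ∀ a b : Finset (Fin n) → ℝ, ∀ θ : ℝ,
      f (fun α => θ * a α + (1 - θ) * b α) = θ * f a + (1 - θ) * f b)
    (gaff : ∀ a b : Finset (Fin n) → ℝ, ∀ θ : ℝ,
      g (fun α => θ * a α + (1 - θ) * b α) = θ * g a + (1 - θ) * g b)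
    (hfg : ∀ h ∈ S, 0 ≤ g h → 0 ≤ f h)
    (hbdd : ∃ l₀ : ℝ, ∀ h ∈ S, g h < 0 → f h ≤ 0 → l₀ * g h ≤ f h) :
    ∃ lam ≥ (0 : ℝ), ∀ h ∈ S, lam * g h ≤ f h := by
  set R : Set ℝ := {r | ∃ h, h ∈ S ∧ g h < 0 ∧ f h ≤ 0 ∧ r = f h / g h} with hR
  rcases R.eq_empty_or_nonempty with hRe | hRne
  · refine ⟨0, le_refl 0, fun h hS => ?_⟩
    rw [zero_mul]
    rcases lt_trichotomy (g h) 0 with hg | hg | hg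
    · by_cases hf : f h ≤ 0
      · exact absurd (show (f h / g h) ∈ R from ⟨h, hS, hg, hf, rfl⟩) (by rw [hRe]; simp)
      · linarith
    · exact hfg h hS hg.ge
    · exact hfg h hS hg.le
  · obtain ⟨l₀, hl₀⟩ := hbdd
    have hRbdd : BddAbove R := by
      refine ⟨l₀, fun r hr => ?_⟩
      obtain ⟨h, hS, hg, hf, rfl⟩ := hr
      exact (div_le_iff_of_neg hg).2 (hl₀ h hS hg hf)
    set lam : ℝ := sSup R with hlam
    have hlam0 : 0 ≤ lam := by
      obtain ⟨r₀, h, hS, hg, hf, rfl⟩ := hRne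
      refine le_trans ?_ (le_csSup hRbdd ⟨h, hS, hg, hf, rfl⟩)
      rw [← neg_div_neg_eq]
      exact div_nonneg (neg_nonneg.2 hf) (neg_nonneg.2 hg.le)
    refine ⟨lam, hlam0, fun h hS => ?_⟩
    rcases lt_trichotomy (g h) 0 with hg | hg | hg
    · by_cases hf : f h ≤ 0
      · exact (div_le_iff_of_neg hg).1 (le_csSup hRbdd ⟨h, hS, hg, hf, rfl⟩)
      · have : lam * g h ≤ 0 := mul_nonpos_of_nonneg_of_nonpos hlam0 hg.le
        linarith
    · rw [hg, mul_zero]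
      exact hfg h hS hg.ge
    · have hlamle : lam ≤ f h / g h := by
        refine csSup_le hRne fun r hr => ?_
        obtain ⟨b, hbS, hgb, hfb, rfl⟩ := hr
        exact ratio_le mix faff gaff hfg hbS hS hgb hg
      exact (le_div_iff₀ hg).1 hlamle
end Separation

section Main

open Finset

variable {n : ℕ}

lemma dot_comb (c' : Finset (Fin n) → ℝ) (a b : Finset (Fin n) → ℝ) (θ : ℝ) :
    ∑ α, c' α * (θ * a α + (1 - θ) * b α)
      = θ * ∑ α, c' α * a α + (1 - θ) * ∑ α, c' α * b α := by
  rw [Finset.mul_sum, Finset.mul_sum, ← Finset.sum_add_distrib]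
  exact Finset.sum_congr rfl fun α _ => by ring

lemma dot_smul (c' : Finset (Fin n) → ℝ) (a : Finset (Fin n) → ℝ) (s : ℝ) :
    ∑ α, c' α * (s * a α) = s * ∑ α, c' α * a α := by
  rw [Finset.mul_sum]
  exact Finset.sum_congr rfl fun α _ => by ring

lemma dot_continuous (c' : Finset (Fin n) → ℝ) :
    Continuous (fun h : Finset (Fin n) → ℝ => ∑ α, c' α * h α) :=
  continuous_finset_sum _ fun α _ => continuous_const.mul (continuous_apply α)

end Main

/-- Theorem 4.9: moving one antecedent of a conditional information
inequality, valid over the almost-entropic cone `cl Γ_n^*`, into the consequent; with the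
`ε = 0` refinement when the antecedents `{c_1, …, c_k}` have slack.  The `k ≥ 1`
antecedents `c_1, …, c_k` are `c 0, …, c (Fin.last k)`. -/
theorem stmt8 (n : ℕ) (hn : 1 ≤ n) (k : ℕ)
    (c : Fin (k + 1) → Finset (Fin n) → ℝ) (c₀ : Finset (Fin n) → ℝ) :
    ((∀ h ∈ almostEntropic n,
        (∀ i : Fin (k + 1), 0 ≤ ∑ α, c i α * h α) → 0 ≤ ∑ α, c₀ α * h α) ↔
      (∀ ε > (0 : ℝ), ∃ lam ≥ (0 : ℝ), ∀ h ∈ almostEntropic n,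
        (∀ i : Fin k, 0 ≤ ∑ α, c i.castSucc α * h α) →
        lam * (∑ α, c (Fin.last k) α * h α) ≤ (∑ α, c₀ α * h α) + ε * h Finset.univ)) ∧
    ((∃ h ∈ almostEntropic n, ∀ i : Fin (k + 1), 0 < ∑ α, c i α * h α) →
      ((∀ h ∈ almostEntropic n,
          (∀ i : Fin (k + 1), 0 ≤ ∑ α, c i α * h α) → 0 ≤ ∑ α, c₀ α * h α) ↔
        (∃ lam ≥ (0 : ℝ), ∀ h ∈ almostEntropic n,
          (∀ i : Fin k, 0 ≤ ∑ α, c i.castSucc α * h α) →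
          lam * (∑ α, c (Fin.last k) α * h α) ≤ ∑ α, c₀ α * h α))) := by
  constructor
  · constructor
    · -- (1) ⇒ (2)
      intro H1 ε hε
      set S : Set (Finset (Fin n) → ℝ) := {h | h ∈ almostEntropic n ∧ h Finset.univ = 1 ∧
        ∀ i : Fin k, 0 ≤ ∑ α, c i.castSucc α * h α} with hSdef
      have mix : ∀ a ∈ S, ∀ b ∈ S, ∀ θ : ℝ, 0 ≤ θ → θ ≤ 1 →
          (fun α => θ * a α + (1 - θ) * b α) ∈ S := by
        rintro a ⟨haK, ha1, hac⟩ b ⟨hbK, hb1, hbc⟩ θ h0 h1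
        refine ⟨almostEntropic_comb haK hbK h0 h1, ?_, fun i => ?_⟩
        · show θ * a Finset.univ + (1 - θ) * b Finset.univ = 1
          rw [ha1, hb1]; ring
        · show 0 ≤ ∑ α, c i.castSucc α * (θ * a α + (1 - θ) * b α)
          rw [dot_comb]
          exact add_nonneg (mul_nonneg h0 (hac i)) (mul_nonneg (by linarith) (hbc i))
      have faff : ∀ a b : Finset (Fin n) → ℝ, ∀ θ : ℝ,
          (fun h : Finset (Fin n) → ℝ => (∑ α, c₀ α * h α) + ε * h Finset.univ)
            (fun α => θ * a α + (1 - θ) * b α)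
          = θ * ((∑ α, c₀ α * a α) + ε * a Finset.univ)
            + (1 - θ) * ((∑ α, c₀ α * b α) + ε * b Finset.univ) := by
        intro a b θ
        show (∑ α, c₀ α * (θ * a α + (1 - θ) * b α))
          + ε * (θ * a Finset.univ + (1 - θ) * b Finset.univ) = _
        rw [dot_comb]; ring
      have gaff : ∀ a b : Finset (Fin n) → ℝ, ∀ θ : ℝ,
          (fun h : Finset (Fin n) → ℝ => ∑ α, c (Fin.last k) α * h α)
            (fun α => θ * a α + (1 - θ) * b α)
          = θ * (∑ α, c (Fin.last k) α * a α) + (1 - θ) * (∑ α, c (Fin.last k) α * b α) := by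
        intro a b θ
        show (∑ α, c (Fin.last k) α * (θ * a α + (1 - θ) * b α)) = _
        rw [dot_comb]
      have hfg : ∀ h ∈ S, 0 ≤ (∑ α, c (Fin.last k) α * h α) →
          0 ≤ (∑ α, c₀ α * h α) + ε * h Finset.univ := by
        rintro h ⟨hK, h1, hcon⟩ hg
        have hall : ∀ i : Fin (k + 1), 0 ≤ ∑ α, c i α * h α :=
          fun i => Fin.lastCases hg hcon i
        have h0 := H1 h hK hall
        rw [h1, mul_one]
        linarith
      -- boundedness via compactness
      have hbdd : ∃ l₀ : ℝ, ∀ h ∈ S, (∑ α, c (Fin.last k) α * h α) < 0 →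
          ((∑ α, c₀ α * h α) + ε * h Finset.univ) ≤ 0 →
          l₀ * (∑ α, c (Fin.last k) α * h α) ≤ (∑ α, c₀ α * h α) + ε * h Finset.univ := by
        set B : Set (Finset (Fin n) → ℝ) := {h | (h ∈ almostEntropic n ∧ h Finset.univ = 1 ∧
          ∀ i : Fin k, 0 ≤ ∑ α, c i.castSucc α * h α) ∧
          (∑ α, c (Fin.last k) α * h α) ≤ 0 ∧
          ((∑ α, c₀ α * h α) + ε * h Finset.univ) ≤ 0} with hBdef
        have hBclosed : IsClosed B := by
          have hBeq : B = almostEntropic n ∩ ({h | h Finset.univ = 1} ∩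
              ((⋂ i : Fin k, {h | 0 ≤ ∑ α, c i.castSucc α * h α}) ∩
              ({h | (∑ α, c (Fin.last k) α * h α) ≤ 0} ∩
              {h | (∑ α, c₀ α * h α) + ε * h Finset.univ ≤ 0}))) := by
            ext h
            simp only [hBdef, Set.mem_setOf_eq, Set.mem_inter_iff, Set.mem_iInter]
            tauto
          rw [hBeq]
          exact almostEntropic_isClosed.inter
            ((isClosed_eq (continuous_apply _) continuous_const).inter
            ((isClosed_iInter fun i => isClosed_le continuous_const (dot_continuous _)).inter
            ((isClosed_le (dot_continuous _) continuous_const).inter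
            (isClosed_le ((dot_continuous _).add (continuous_const.mul (continuous_apply _)))
              continuous_const))))
        have hBsub : B ⊆ Set.univ.pi (fun _ : Finset (Fin n) => Set.Icc (0 : ℝ) 1) := by
          rintro h ⟨⟨hK, h1, _⟩, _, _⟩ α _
          exact ⟨almostEntropic_nonneg hK α, by rw [← h1]; exact almostEntropic_le_univ hK α⟩
        have hBcompact : IsCompact B :=
          IsCompact.of_isClosed_subset (isCompact_univ_pi fun _ => isCompact_Icc)
            hBclosed hBsub
        have hgneg : ∀ h ∈ B, (∑ α, c (Fin.last k) α * h α) < 0 := by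
          rintro h ⟨⟨hK, h1, hcon⟩, hg, hf⟩
          rcases hg.lt_or_eq with hlt | heq
          · exact hlt
          · exfalso
            have hall : ∀ i : Fin (k + 1), 0 ≤ ∑ α, c i α * h α :=
              fun i => Fin.lastCases heq.ge hcon i
            have h0 := H1 h hK hall
            rw [h1, mul_one] at hf
            linarith
        rcases B.eq_empty_or_nonempty with hBe | hBne
        · exact ⟨0, fun h hS hg hf =>
            absurd (show h ∈ B from ⟨hS, hg.le, hf⟩) (by rw [hBe]; exact Set.notMem_empty h)⟩
        · have hcont : ContinuousOn (fun h : Finset (Fin n) → ℝ =>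
              ((∑ α, c₀ α * h α) + ε * h Finset.univ) / (∑ α, c (Fin.last k) α * h α)) B :=
            ContinuousOn.div
              (((dot_continuous c₀).add (continuous_const.mul (continuous_apply Finset.univ))).continuousOn)
              ((dot_continuous _).continuousOn)
              (fun h hB => (hgneg h hB).ne)
          obtain ⟨b0, hb0B, hmax⟩ := hBcompact.exists_isMaxOn hBne hcont
          refine ⟨((∑ α, c₀ α * b0 α) + ε * b0 Finset.univ) / (∑ α, c (Fin.last k) α * b0 α),
            fun h hS hg hf => ?_⟩
          have hmem : h ∈ B := ⟨hS, hg.le, hf⟩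
          exact (div_le_iff_of_neg hg).1 (hmax hmem)
      obtain ⟨lam, hlam0, hlam⟩ := sep (S := S)
        (f := fun h : Finset (Fin n) → ℝ => (∑ α, c₀ α * h α) + ε * h Finset.univ)
        (g := fun h : Finset (Fin n) → ℝ => ∑ α, c (Fin.last k) α * h α)
        mix faff gaff hfg hbdd
      refine ⟨lam, hlam0, fun h hK hcon => ?_⟩
      by_cases hu : h Finset.univ = 0
      · have hz : ∀ α, h α = 0 := fun α =>
          le_antisymm (by rw [← hu]; exact almostEntropic_le_univ hK α)
            (almostEntropic_nonneg hK α)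
        have hzero : ∀ c' : Finset (Fin n) → ℝ, ∑ α, c' α * h α = 0 :=
          fun c' => Finset.sum_eq_zero fun α _ => by rw [hz α, mul_zero]
        rw [hzero, hzero, hu, mul_zero, mul_zero, add_zero]
      · have hu' : 0 < h Finset.univ :=
          lt_of_le_of_ne (almostEntropic_nonneg hK Finset.univ) (Ne.symm hu)
        set u := h Finset.univ with hudef
        have hmem : (fun α => u⁻¹ * h α) ∈ S := by
          refine ⟨almostEntropic_smul hK (inv_pos.2 hu'), ?_, fun i => ?_⟩
          · show u⁻¹ * h Finset.univ = 1
            rw [← hudef]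
            exact inv_mul_cancel₀ hu'.ne'
          · show 0 ≤ ∑ α, c i.castSucc α * (u⁻¹ * h α)
            rw [dot_smul]
            exact mul_nonneg (inv_pos.2 hu').le (hcon i)
        have h2 := hlam _ hmem
        rw [dot_smul, dot_smul] at h2
        have h2' : lam * (u⁻¹ * ∑ α, c (Fin.last k) α * h α)
            ≤ u⁻¹ * (∑ α, c₀ α * h α) + ε * (u⁻¹ * u) := h2
        calc lam * (∑ α, c (Fin.last k) α * h α)
            = u * (lam * (u⁻¹ * ∑ α, c (Fin.last k) α * h α)) := by
              field_simp
          _ ≤ u * (u⁻¹ * (∑ α, c₀ α * h α) + ε * (u⁻¹ * u)) :=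
              mul_le_mul_of_nonneg_left h2' hu'.le
          _ = (∑ α, c₀ α * h α) + ε * u := by
              field_simp
              try ring
    · -- (2) ⇒ (1)
      intro H2 h hK hcon
      have hu0 : 0 ≤ h Finset.univ := almostEntropic_nonneg hK _
      by_contra hneg
      push_neg at hneg
      set u := h Finset.univ with hudef
      set d := -(∑ α, c₀ α * h α) with hd
      have hdpos : 0 < d := by rw [hd]; linarith
      have hεpos : 0 < d / (2 * (u + 1)) := by positivity
      obtain ⟨lam, hlam0, hl⟩ := H2 _ hεpos
      have h1 := hl h hK (fun i => hcon i.castSucc)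
      have h2 : 0 ≤ lam * (∑ α, c (Fin.last k) α * h α) :=
        mul_nonneg hlam0 (hcon (Fin.last k))
      have hune : u + 1 ≠ 0 := by linarith
      have h3 : d / (2 * (u + 1)) * (u + 1) = d / 2 := by
        field_simp
      have h4 : d / (2 * (u + 1)) * u ≤ d / (2 * (u + 1)) * (u + 1) :=
        mul_le_mul_of_nonneg_left (by linarith) hεpos.le
      have h5 : (∑ α, c₀ α * h α) = -d := by rw [hd]; ring
      linarith
  · -- part 2
    rintro ⟨hstar, hstarK, hstarpos⟩
    constructor
    · intro H1
      set S : Set (Finset (Fin n) → ℝ) := {h | h ∈ almostEntropic n ∧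
        ∀ i : Fin k, 0 ≤ ∑ α, c i.castSucc α * h α} with hSdef
      have mix : ∀ a ∈ S, ∀ b ∈ S, ∀ θ : ℝ, 0 ≤ θ → θ ≤ 1 →
          (fun α => θ * a α + (1 - θ) * b α) ∈ S := by
        rintro a ⟨haK, hac⟩ b ⟨hbK, hbc⟩ θ h0 h1
        refine ⟨almostEntropic_comb haK hbK h0 h1, fun i => ?_⟩
        show 0 ≤ ∑ α, c i.castSucc α * (θ * a α + (1 - θ) * b α)
        rw [dot_comb]
        exact add_nonneg (mul_nonneg h0 (hac i)) (mul_nonneg (by linarith) (hbc i))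
      have faff : ∀ a b : Finset (Fin n) → ℝ, ∀ θ : ℝ,
          (fun h : Finset (Fin n) → ℝ => ∑ α, c₀ α * h α)
            (fun α => θ * a α + (1 - θ) * b α)
          = θ * (∑ α, c₀ α * a α) + (1 - θ) * (∑ α, c₀ α * b α) := by
        intro a b θ
        show (∑ α, c₀ α * (θ * a α + (1 - θ) * b α)) = _
        rw [dot_comb]
      have gaff : ∀ a b : Finset (Fin n) → ℝ, ∀ θ : ℝ,
          (fun h : Finset (Fin n) → ℝ => ∑ α, c (Fin.last k) α * h α)
            (fun α => θ * a α + (1 - θ) * b α)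
          = θ * (∑ α, c (Fin.last k) α * a α) + (1 - θ) * (∑ α, c (Fin.last k) α * b α) := by
        intro a b θ
        show (∑ α, c (Fin.last k) α * (θ * a α + (1 - θ) * b α)) = _
        rw [dot_comb]
      have hfg : ∀ h ∈ S, 0 ≤ (∑ α, c (Fin.last k) α * h α) → 0 ≤ (∑ α, c₀ α * h α) := by
        rintro h ⟨hK, hcon⟩ hg
        exact H1 h hK (fun i => Fin.lastCases hg hcon i)
      have hstarS : hstar ∈ S := ⟨hstarK, fun i => (hstarpos i.castSucc).le⟩
      have hbdd : ∃ l₀ : ℝ, ∀ h ∈ S, (∑ α, c (Fin.last k) α * h α) < 0 →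
          (∑ α, c₀ α * h α) ≤ 0 → l₀ * (∑ α, c (Fin.last k) α * h α) ≤ (∑ α, c₀ α * h α) := by
        refine ⟨(∑ α, c₀ α * hstar α) / (∑ α, c (Fin.last k) α * hstar α),
          fun h hS hg _ => ?_⟩
        exact (div_le_iff_of_neg hg).1
          (ratio_le mix faff gaff hfg hS hstarS hg (hstarpos (Fin.last k)))
      obtain ⟨lam, hlam0, hl⟩ := sep (S := S)
        (f := fun h : Finset (Fin n) → ℝ => ∑ α, c₀ α * h α)
        (g := fun h : Finset (Fin n) → ℝ => ∑ α, c (Fin.last k) α * h α)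
        mix faff gaff hfg hbdd
      exact ⟨lam, hlam0, fun h hK hcon => hl h ⟨hK, hcon⟩⟩
    · rintro ⟨lam, hlam0, hl⟩ h hK hcon
      have h1 := hl h hK (fun i => hcon i.castSucc)
      have h2 : 0 ≤ lam * (∑ α, c (Fin.last k) α * h α) :=
        mul_nonneg hlam0 (hcon (Fin.last k))
      linarith
end

section
/- Let h ∈ ℝ^(2^n) and suppose h ∉ cl Γ_n^*. Then there exists a vector c ∈ ℝ^(2^n) with integer coordinates such that c·h₀ ≥ 0 for every entropic vector h₀ ∈ Γ_n^*, while c·h < 0. In other words, every vector that is not almost entropic is separated from the entropic vectors by an information inequality with integral coefficients. -/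
/-! Entropy profiles of independent pairs add, and mixing a profile `h` with weight `μ` with one
fresh outcome gives `μ • h` plus a binary-entropy term on nonempty sets, which vanishes as
`μ → 0`. Mixing `k • h` with weight `t / k` and letting `k → ∞` therefore shows that `cl Γ_n^*`
is a closed convex cone, so Farkas' lemma separates `h` from it by a linear functional `c`.
Entropic vectors are nonnegative, so rounding the coefficients of `N • c` up keeps the
functional nonnegative on them, while for large `N` the rounding error cannot change its
sign at `h`. -/

open Finset Real

section Shannon

variable {Ω Ω' V W : Type*} [Fintype Ω] [DecidableEq V] [DecidableEq W]

noncomputable def pushforward (p : Ω → ℝ) (f : Ω → V) (v : V) : ℝ :=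
  ∑ ω ∈ univ.filter (f · = v), p ω

noncomputable def shannonEntropy (p : Ω → ℝ) (f : Ω → V) : ℝ :=
  ∑' v, negMulLog (pushforward p f v)

variable {p : Ω → ℝ} {f : Ω → V} {S : Finset V}

lemma pushforward_nonneg (hp : ∀ ω, 0 ≤ p ω) (v : V) : 0 ≤ pushforward p f v :=
  sum_nonneg fun ω _ => hp ω

lemma pushforward_le_one (hp : ∀ ω, 0 ≤ p ω) (hp1 : ∑ ω, p ω = 1) (v : V) :
    pushforward p f v ≤ 1 :=
  hp1 ▸ sum_le_sum_of_subset_of_nonneg (filter_subset _ _) fun ω _ _ => hp ω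

lemma pushforward_eq_zero {v : V} (hv : ∀ ω, f ω ≠ v) : pushforward p f v = 0 :=
  sum_eq_zero fun ω hω => absurd (mem_filter.1 hω).2 (hv ω)

lemma sum_pushforward (hS : ∀ ω, f ω ∈ S) : ∑ v ∈ S, pushforward p f v = ∑ ω, p ω :=
  sum_fiberwise_of_maps_to (fun ω _ => hS ω) p

lemma shannonEntropy_eq_sum (hS : ∀ ω, f ω ∈ S) :
    shannonEntropy p f = ∑ v ∈ S, negMulLog (pushforward p f v) := by
  refine tsum_eq_sum fun v hv => ?_
  rw [pushforward_eq_zero (f := f) (v := v) fun ω hω => hv (hω ▸ hS ω), negMulLog_zero]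

lemma shannonEntropy_nonneg (hp : ∀ ω, 0 ≤ p ω) (hp1 : ∑ ω, p ω = 1) :
    0 ≤ shannonEntropy p f :=
  tsum_nonneg fun v => negMulLog_nonneg (pushforward_nonneg hp v) (pushforward_le_one hp hp1 v)

lemma shannonEntropy_eq_zero_of_forall_eq {v : V} (hf : ∀ ω, f ω = v) (hp1 : ∑ ω, p ω = 1) :
    shannonEntropy p f = 0 := by
  have hS : ∀ ω, f ω ∈ ({v} : Finset V) := fun ω => mem_singleton.2 (hf ω)
  have hv : pushforward p f v = 1 := by simpa [hp1] using sum_pushforward (p := p) hS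
  rw [shannonEntropy_eq_sum hS, sum_singleton, hv, negMulLog_one]

lemma shannonEntropy_comp {φ : V → W} (hφ : Function.Injective φ) :
    shannonEntropy p (φ ∘ f) = shannonEntropy p f := by
  have hpush : ∀ v, pushforward p (φ ∘ f) (φ v) = pushforward p f v := fun v => by
    simp only [pushforward, Function.comp_apply, hφ.eq_iff]
  have hsupp : (Function.support fun w => negMulLog (pushforward p (φ ∘ f) w)) ⊆ Set.range φ := by
    intro w hw
    by_contra hrange
    exact hw (by
      simp only [pushforward_eq_zero (f := φ ∘ f) fun ω hω => hrange ⟨f ω, hω⟩, negMulLog_zero])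
  rw [shannonEntropy, ← hφ.tsum_eq hsupp]
  simp only [hpush, shannonEntropy]

lemma shannonEntropy_comp_equiv [Fintype Ω'] (e : Ω' ≃ Ω) :
    shannonEntropy (p ∘ e) (f ∘ e) = shannonEntropy p f := by
  have hpush : ∀ v, pushforward (p ∘ e) (f ∘ e) v = pushforward p f v := fun v => by
    simp only [pushforward, sum_filter, Function.comp_apply]
    exact e.sum_comp fun ω => if f ω = v then p ω else 0
  simp only [shannonEntropy, hpush]

end Shannon

section Constructions

variable {Ω Ω' V W : Type*} [Fintype Ω] [Fintype Ω'] [DecidableEq V] [DecidableEq W]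

lemma pushforward_prodMap (p : Ω → ℝ) (q : Ω' → ℝ) (f : Ω → V) (g : Ω' → W) (v : V) (w : W) :
    pushforward (fun x => p x.1 * q x.2) (Prod.map f g) (v, w)
      = pushforward p f v * pushforward q g w := by
  rw [pushforward, pushforward, pushforward, sum_mul_sum, ← sum_product']
  congr 1
  ext x
  simp [Prod.ext_iff]

lemma shannonEntropy_prodMap {p : Ω → ℝ} {q : Ω' → ℝ} (hp1 : ∑ ω, p ω = 1)
    (hq1 : ∑ ω, q ω = 1) (f : Ω → V) (g : Ω' → W) :
    shannonEntropy (fun x => p x.1 * q x.2) (Prod.map f g)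
      = shannonEntropy p f + shannonEntropy q g := by
  have hf : ∀ ω, f ω ∈ univ.image f := fun ω => mem_image_of_mem f (mem_univ ω)
  have hg : ∀ ω, g ω ∈ univ.image g := fun ω => mem_image_of_mem g (mem_univ ω)
  rw [shannonEntropy_eq_sum (S := univ.image f ×ˢ univ.image g)
      fun x => mem_product.2 ⟨hf x.1, hg x.2⟩,
    shannonEntropy_eq_sum hf, shannonEntropy_eq_sum hg, sum_product]
  simp only [pushforward_prodMap, negMulLog_mul, sum_add_distrib, ← mul_sum, ← sum_mul,
    sum_pushforward hf, sum_pushforward hg, hp1, hq1, one_mul]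

lemma shannonEntropy_optionMap {p : Ω → ℝ} (hp1 : ∑ ω, p ω = 1) (μ : ℝ) (f : Ω → V) :
    shannonEntropy (fun o => o.elim (1 - μ) (μ * p ·)) (Option.map f)
      = binEntropy μ + μ * shannonEntropy p f := by
  have hf : ∀ ω, f ω ∈ univ.image f := fun ω => mem_image_of_mem f (mem_univ ω)
  have hS : ∀ o, Option.map f o ∈ (univ.image f).insertNone := by
    rintro (_ | ω) <;> simp
  have hnone : pushforward (fun o => o.elim (1 - μ) (μ * p ·)) (Option.map f) none = 1 - μ := by
    simp [pushforward, sum_filter, Fintype.sum_option]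
  have hsome : ∀ v, pushforward (fun o => o.elim (1 - μ) (μ * p ·)) (Option.map f) (some v)
      = μ * pushforward p f v := fun v => by
    simp [pushforward, sum_filter, Fintype.sum_option, mul_sum]
  rw [shannonEntropy_eq_sum hS, sum_insertNone, shannonEntropy_eq_sum hf, hnone]
  simp only [hsome, negMulLog_mul, sum_add_distrib, ← sum_mul, ← mul_sum, sum_pushforward hf, hp1,
    binEntropy_eq_negMulLog_add_negMulLog_one_sub]
  ring

end Constructions

section Profile

variable {n : ℕ} {Ω Ω' : Type*} [Fintype Ω] [Fintype Ω'] {p : Ω → ℝ} {q : Ω' → ℝ}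

def jointMap (X : Fin n → Ω → ℕ) (α : Finset (Fin n)) (ω : Ω) : α → ℕ := fun i => X i ω

noncomputable def entropyProfile (p : Ω → ℝ) (X : Fin n → Ω → ℕ) : Finset (Fin n) → ℝ :=
  fun α => shannonEntropy p (jointMap X α) / log 2

lemma entropyOn_eq_entropyProfile {N : ℕ} (p : Fin N → ℝ) (X : Fin n → Fin N → ℕ)
    (α : Finset (Fin n)) : entropyOn p X α = entropyProfile p X α := by
  simp only [entropyOn, entropyProfile, shannonEntropy, marginalProb, pushforward, jointMap,
    funext_iff]

lemma isEntropic_entropyProfile (hp : ∀ ω, 0 ≤ p ω) (hp1 : ∑ ω, p ω = 1)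
    (X : Fin n → Ω → ℕ) : IsEntropic n (entropyProfile p X) := by
  let e := (Fintype.equivFin Ω).symm
  have hΩ : 0 < Fintype.card Ω :=
    Fintype.card_pos_iff.2 (univ_nonempty_iff.1 (nonempty_of_sum_ne_zero (hp1 ▸ one_ne_zero)))
  refine ⟨_, p ∘ e, fun i => X i ∘ e, hΩ, fun ω => hp _, by rw [← hp1]; exact e.sum_comp p,
    fun α => ?_⟩
  rw [entropyOn_eq_entropyProfile]
  exact congrArg (· / log 2) (shannonEntropy_comp_equiv e).symm

lemma IsEntropic.exists_eq_entropyProfile {h : Finset (Fin n) → ℝ} (hh : IsEntropic n h) :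
    ∃ (N : ℕ) (p : Fin N → ℝ) (X : Fin n → Fin N → ℕ),
      (∀ ω, 0 ≤ p ω) ∧ ∑ ω, p ω = 1 ∧ h = entropyProfile p X := by
  obtain ⟨N, p, X, -, hp, hp1, hh⟩ := hh
  exact ⟨N, p, X, hp, hp1, funext fun α => (hh α).trans (entropyOn_eq_entropyProfile p X α)⟩

lemma entropyProfile_nonneg (hp : ∀ ω, 0 ≤ p ω) (hp1 : ∑ ω, p ω = 1) (X : Fin n → Ω → ℕ)
    (α : Finset (Fin n)) : 0 ≤ entropyProfile p X α :=
  div_nonneg (shannonEntropy_nonneg hp hp1) (log_nonneg one_le_two)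

lemma entropyProfile_empty (hp1 : ∑ ω, p ω = 1) (X : Fin n → Ω → ℕ) :
    entropyProfile p X ∅ = 0 := by
  rw [entropyProfile, shannonEntropy_eq_zero_of_forall_eq (v := isEmptyElim)
    (fun ω => Subsingleton.elim _ _) hp1, zero_div]

lemma entropyProfile_pair (hp1 : ∑ ω, p ω = 1) (hq1 : ∑ ω, q ω = 1) (X : Fin n → Ω → ℕ)
    (Y : Fin n → Ω' → ℕ) :
    entropyProfile (fun x : Ω × Ω' => p x.1 * q x.2) (fun i x => Nat.pair (X i x.1) (Y i x.2))
      = entropyProfile p X + entropyProfile q Y := by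
  funext α
  let pairing : (α → ℕ) × (α → ℕ) → α → ℕ := fun vw i => Nat.pair (vw.1 i) (vw.2 i)
  have hpairing : pairing.Injective := fun vw vw' h => Prod.ext
    (funext fun i => (Nat.pair_eq_pair.1 (congrFun h i)).1)
    (funext fun i => (Nat.pair_eq_pair.1 (congrFun h i)).2)
  change shannonEntropy _ (pairing ∘ Prod.map (jointMap X α) (jointMap Y α)) / log 2 = _
  rw [shannonEntropy_comp hpairing, shannonEntropy_prodMap hp1 hq1, add_div]
  rfl

lemma entropyProfile_mix (hp1 : ∑ ω, p ω = 1) (μ : ℝ) (X : Fin n → Ω → ℕ) :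
    entropyProfile (fun o : Option Ω => o.elim (1 - μ) (μ * p ·)) (fun i o => o.elim 0 (X i · + 1))
      = fun α => μ * entropyProfile p X α + if α = ∅ then 0 else binEntropy μ / log 2 := by
  funext α
  rcases α.eq_empty_or_nonempty with rfl | ⟨i₀, hi₀⟩
  · have hsum : ∑ o : Option Ω, o.elim (1 - μ) (μ * p ·) = 1 := by
      rw [Fintype.sum_option]
      simp [← mul_sum, hp1]
    simp [entropyProfile_empty hsum, entropyProfile_empty hp1]
  let shift : Option (α → ℕ) → α → ℕ := fun o => o.elim 0 (· + 1)
  have hshift : shift.Injective := by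
    rintro (_ | v) (_ | w) h
    · rfl
    · simpa [shift] using congrFun h ⟨i₀, hi₀⟩
    · simpa [shift] using congrFun h ⟨i₀, hi₀⟩
    · simpa [shift] using h
  have hjoint : jointMap (fun i (o : Option Ω) => o.elim 0 (X i · + 1)) α
      = shift ∘ Option.map (jointMap X α) := by
    funext o; cases o <;> rfl
  rw [entropyProfile, hjoint, shannonEntropy_comp hshift, shannonEntropy_optionMap hp1,
    if_neg (nonempty_iff_ne_empty.1 ⟨i₀, hi₀⟩), entropyProfile]
  ring

end Profile

section Entropic

variable {n : ℕ} {h h' : Finset (Fin n) → ℝ}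

lemma IsEntropic.nonneg (hh : IsEntropic n h) (α : Finset (Fin n)) : 0 ≤ h α := by
  obtain ⟨N, p, X, hp, hp1, rfl⟩ := hh.exists_eq_entropyProfile
  exact entropyProfile_nonneg hp hp1 X α

lemma isEntropic_zero_s13 : IsEntropic n 0 := by
  have h0 : entropyProfile (fun _ : Unit => (1 : ℝ)) (fun (_ : Fin n) _ => 0) = 0 := by
    funext α
    rw [entropyProfile, shannonEntropy_eq_zero_of_forall_eq (f := jointMap (fun _ _ => 0) α)
      (v := 0) (fun _ => rfl) (by simp), zero_div, Pi.zero_apply]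
  exact h0 ▸ isEntropic_entropyProfile (fun _ => zero_le_one) (by simp) _

lemma IsEntropic.add (hh : IsEntropic n h) (hh' : IsEntropic n h') : IsEntropic n (h + h') := by
  obtain ⟨N, p, X, hp, hp1, rfl⟩ := hh.exists_eq_entropyProfile
  obtain ⟨N', q, Y, hq, hq1, rfl⟩ := hh'.exists_eq_entropyProfile
  rw [← entropyProfile_pair hp1 hq1]
  refine isEntropic_entropyProfile (fun x : Fin N × Fin N' => mul_nonneg (hp x.1) (hq x.2)) ?_ _
  rw [← univ_product_univ, sum_product, ← sum_mul_sum, hp1, hq1, one_mul]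

lemma IsEntropic.mix (hh : IsEntropic n h) {μ : ℝ} (hμ₀ : 0 ≤ μ) (hμ₁ : μ ≤ 1) :
    IsEntropic n fun α => μ * h α + if α = ∅ then 0 else binEntropy μ / log 2 := by
  obtain ⟨N, p, X, hp, hp1, rfl⟩ := hh.exists_eq_entropyProfile
  rw [← entropyProfile_mix hp1]
  refine isEntropic_entropyProfile ?_ ?_ _
  · rintro (_ | ω)
    · exact sub_nonneg.2 hμ₁
    · exact mul_nonneg hμ₀ (hp ω)
  · simp [Fintype.sum_option, ← mul_sum, hp1]

end Entropic

section Cone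

variable {n : ℕ}

open Filter

def entropicSubmonoid (n : ℕ) : AddSubmonoid (Finset (Fin n) → ℝ) where
  carrier := {h | IsEntropic n h}
  add_mem' := IsEntropic.add
  zero_mem' := isEntropic_zero_s13

lemma IsEntropic.smul_mem_almostEntropic {h : Finset (Fin n) → ℝ} (hh : IsEntropic n h) {t : ℝ}
    (ht : 0 ≤ t) : t • h ∈ almostEntropic n := by
  have hmix : ∀ᶠ k : ℕ in atTop,
      IsEntropic n fun α => t * h α + if α = ∅ then 0 else binEntropy (t / k) / log 2 := by
    filter_upwards [eventually_ge_atTop ⌈t⌉₊, eventually_ge_atTop 1] with k hkt hk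
    have hk0 : (0 : ℝ) < k := by exact_mod_cast hk
    have hkh := (nsmul_mem (show h ∈ entropicSubmonoid n from hh) k).mix
      (div_nonneg ht hk0.le) (div_le_one_of_le₀ (Nat.ceil_le.1 hkt) hk0.le)
    convert hkh using 3 with α
    rw [Pi.smul_apply, nsmul_eq_mul]
    field_simp
  have hcont : Continuous fun μ : ℝ => fun α : Finset (Fin n) =>
      t * h α + if α = ∅ then 0 else binEntropy μ / log 2 :=
    continuous_pi fun α => by split_ifs <;> fun_prop
  have htend := (hcont.tendsto 0).comp (tendsto_const_div_atTop_nhds_zero_nat t)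
  simp only [binEntropy_zero, zero_div, ite_self, add_zero] at htend
  exact mem_closure_of_tendsto htend hmix

lemma smul_mem_almostEntropic {x : Finset (Fin n) → ℝ} (hx : x ∈ almostEntropic n) {t : ℝ}
    (ht : 0 ≤ t) : t • x ∈ almostEntropic n := by
  have := map_mem_closure (continuous_const_smul t) hx fun y hy =>
    IsEntropic.smul_mem_almostEntropic hy ht
  rwa [almostEntropic, closure_closure] at this

def almostEntropicCone (n : ℕ) : ProperCone ℝ (Finset (Fin n) → ℝ) where
  carrier := almostEntropic n
  add_mem' := (entropicSubmonoid n).topologicalClosure.add_mem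
  zero_mem' := subset_closure isEntropic_zero_s13
  smul_mem' c _ hx := smul_mem_almostEntropic hx c.2
  isClosed' := isClosed_closure

end Cone

section IntegerCoefficients

variable {ι : Type*} [Fintype ι]

lemma dotProduct_le_ceil_dotProduct (c : ι → ℝ) {x : ι → ℝ} (hx : 0 ≤ x) :
    c ⬝ᵥ x ≤ (fun i => (⌈c i⌉ : ℝ)) ⬝ᵥ x :=
  sum_le_sum fun i _ => mul_le_mul_of_nonneg_right (Int.le_ceil (c i)) (hx i)

lemma ceil_dotProduct_le (c y : ι → ℝ) :
    (fun i => (⌈c i⌉ : ℝ)) ⬝ᵥ y ≤ c ⬝ᵥ y + ∑ i, |y i| := by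
  rw [dotProduct, dotProduct, ← sum_add_distrib]
  refine sum_le_sum fun i _ => ?_
  have h₀ : 0 ≤ (⌈c i⌉ : ℝ) - c i := sub_nonneg.2 (Int.le_ceil (c i))
  have h₁ : (⌈c i⌉ : ℝ) - c i < 1 := by linarith [Int.ceil_lt_add_one (c i)]
  nlinarith [abs_nonneg (y i), le_abs_self (y i), neg_abs_le (y i)]

lemma exists_int_dotProduct_of_nonneg {S : Set (ι → ℝ)} (hS : ∀ x ∈ S, 0 ≤ x) {c y : ι → ℝ}
    (hc : ∀ x ∈ S, 0 ≤ c ⬝ᵥ x) (hy : c ⬝ᵥ y < 0) :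
    ∃ z : ι → ℤ, (∀ x ∈ S, 0 ≤ ∑ i, (z i : ℝ) * x i) ∧ ∑ i, (z i : ℝ) * y i < 0 := by
  obtain ⟨N, hN⟩ := exists_nat_gt ((∑ i, |y i|) / -(c ⬝ᵥ y))
  rw [div_lt_iff₀ (neg_pos.2 hy)] at hN
  refine ⟨fun i => ⌈(N • c) i⌉, fun x hx => ?_, ?_⟩
  · calc 0 ≤ (N • c) ⬝ᵥ x := by
          rw [smul_dotProduct]; exact smul_nonneg (Nat.cast_nonneg N) (hc x hx)
      _ ≤ _ := dotProduct_le_ceil_dotProduct _ (hS x hx)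
  · calc _ ≤ (N • c) ⬝ᵥ y + ∑ i, |y i| := ceil_dotProduct_le _ y
      _ < 0 := by rw [smul_dotProduct, nsmul_eq_mul]; linarith

end IntegerCoefficients

theorem stmt13_general (n : ℕ) (h : Finset (Fin n) → ℝ)
    (hh : h ∉ almostEntropic n) :
    ∃ c : Finset (Fin n) → ℤ,
      (∀ h₀ : Finset (Fin n) → ℝ, IsEntropic n h₀ → 0 ≤ ∑ α, (c α : ℝ) * h₀ α) ∧
      (∑ α, (c α : ℝ) * h α) < 0 := by
  obtain ⟨f, hf, hfh⟩ := (almostEntropicCone n).hyperplane_separation_point hh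
  let c := (dotProductEquiv ℝ (Finset (Fin n))).symm f.toLinearMap
  have hc : ∀ x, c ⬝ᵥ x = f x := fun x =>
    LinearMap.congr_fun ((dotProductEquiv ℝ _).apply_symm_apply f.toLinearMap) x
  exact exists_int_dotProduct_of_nonneg (fun x hx => IsEntropic.nonneg hx)
    (fun x hx => hc x ▸ hf x (subset_closure hx)) (hc h ▸ hfh)

/-- Lemma E.1: every vector `h ∉ cl Γ_n^*` is separated from the entropic
vectors by an information inequality with integer coefficients. -/
theorem stmt13 (n : ℕ) (hn : 1 ≤ n) (h : Finset (Fin n) → ℝ)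
    (hh : h ∉ almostEntropic n) :
    ∃ c : Finset (Fin n) → ℤ,
      (∀ h₀ : Finset (Fin n) → ℝ, IsEntropic n h₀ → 0 ≤ ∑ α, (c α : ℝ) * h₀ α) ∧
      (∑ α, (c α : ℝ) * h α) < 0 :=
  stmt13_general n h hh
end
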